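/- arXiv:0911.0090 — 8 statements merged into one kernel-verified Lean document; each statement's English description precedes it below -/
import Mathlib

section
/- Let G be a finitely generated group, K a subgroup of G, Σ a finite alphabet, and ψ : Σ → G a semigroup presentation of G (i.e., the image ψ(Σ) generates G as a semigroup/monoid). Then the word problem L(G,K,ψ) = { w ∈ Σ* : ψ(w) ∈ K } is a regular language if and only if K has finite index in G. -/
/-!
By Myhill–Nerode, a language is regular iff it has finitely many left quotients. For the word
problem of `S ⊆ G` the left quotient by `x` is the preimage of the translate `ψ(x)⁻¹ • S`, and
since `ψ` is onto, distinct translates have distinct preimages. So the word problem of `K` is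
regular iff `K` has finitely many left translates, i.e. finitely many cosets.
-/

open scoped Pointwise

theorem Subgroup.finite_range_smul_iff_finiteIndex {G : Type*} [Group G] (K : Subgroup G) :
    (Set.range fun g : G => g • (K : Set G)).Finite ↔ K.FiniteIndex := by
  have hcoset : ∀ a b : G, QuotientGroup.leftRel K a b → a • (K : Set G) = b • K := fun _ _ h =>
    (leftCoset_eq_iff K).mpr (QuotientGroup.leftRel_apply.mp h)
  have hinj : Function.Injective (Quotient.lift _ hcoset : G ⧸ K → Set G) := by
    rintro ⟨a⟩ ⟨b⟩ h
    exact QuotientGroup.eq.mpr ((leftCoset_eq_iff K).mp h)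
  rw [← Set.range_quotient_lift (s := QuotientGroup.leftRel K) hcoset,
    Set.finite_range_iff hinj]
  exact K.finiteIndex_iff_finite_quotient.symm

namespace Language

variable {α G : Type*} [Group G]

theorem leftQuotient_setOf_prod_map_mem (ψ : α → G) (S : Set G) (x : List α) :
    leftQuotient {w | (w.map ψ).prod ∈ S} x =
      (fun w : List α => (w.map ψ).prod) ⁻¹' (((x.map ψ).prod)⁻¹ • S) := by
  ext y
  change ((x ++ y).map ψ).prod ∈ S ↔ (y.map ψ).prod ∈ ((x.map ψ).prod)⁻¹ • S
  rw [Set.mem_inv_smul_set_iff, List.map_append, List.prod_append, smul_eq_mul]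

theorem isRegular_setOf_prod_map_mem_iff {ψ : α → G}
    (hψ : Function.Surjective fun w : List α => (w.map ψ).prod) (S : Set G) :
    IsRegular {w | (w.map ψ).prod ∈ S} ↔ (Set.range fun g : G => g • S).Finite := by
  have hrange : Set.range (leftQuotient {w | (w.map ψ).prod ∈ S}) =
      Set.preimage (fun w : List α => (w.map ψ).prod) '' Set.range fun g : G => g • S := by
    rw [funext (leftQuotient_setOf_prod_map_mem ψ S), ← Set.range_comp]
    exact (inv_surjective.comp hψ).range_comp (Set.preimage _ ∘ fun g => g • S)
  refine isRegular_iff_finite_range_leftQuotient.trans ?_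
  rw [hrange]
  exact Set.finite_image_iff (Set.preimage_injective.mpr hψ).injOn

end Language

theorem regular_word_problem_iff_finiteIndex_general
    {G : Type} [Group G] (K : Subgroup G)
    {α : Type} (ψ : α → G)
    (hψ : ∀ g : G, ∃ w : List α, (w.map ψ).prod = g) :
    Language.IsRegular {w : List α | (w.map ψ).prod ∈ K} ↔ K.FiniteIndex :=
  (Language.isRegular_setOf_prod_map_mem_iff hψ K).trans K.finite_range_smul_iff_finiteIndex

/-- Let `G` be a finitely generated group, `K` a subgroup of `G`,
`α` a finite alphabet and `ψ : α → G` a semigroup presentation of `G` (the image of `ψ`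
generates `G` as a semigroup, i.e. every element of `G` is a product of letters' images).
Then the word problem `L(G,K,ψ) = { w | ψ(w) ∈ K }` is regular iff `[G:K] < ∞`. -/
theorem regular_word_problem_iff_finiteIndex
    {G : Type} [Group G] [Group.FG G] (K : Subgroup G)
    {α : Type} [Fintype α] (ψ : α → G)
    (hψ : ∀ g : G, ∃ w : List α, (w.map ψ).prod = g) :
    Language.IsRegular {w : List α | (w.map ψ).prod ∈ K} ↔ K.FiniteIndex :=
  regular_word_problem_iff_finiteIndex_general K ψ hψ
end

section
/- Let G be a finitely generated group with semigroup presentation ψ : Σ → G, and let K be a subgroup of G. Let H be a finitely generated subgroup of G with semigroup presentation ψ' : Σ' → H (so ψ'(Σ') generates H as a semigroup). If the language L(G,K,ψ) = { w ∈ Σ* : ψ(w) ∈ K } is context-free, then the language L(H, K ∩ H, ψ') = { w ∈ (Σ')* : ψ'(w) ∈ K ∩ H } is also context-free. -/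
/-!
Choose words `u g` over `α` with `ψ (u g) = g` and put `f b := u (ψ' b)`. Then `ψ' w = ψ (f w)`,
so `L(H, K ⊓ H, ψ')` is the preimage of `L(G, K, ψ)` under the monoid homomorphism
`w ↦ f w = w.flatMap f`, and it suffices that context-free languages are closed under inverse
homomorphisms.

For that, `w` is matched against a word `z` with a buffer: the buffer holds the part of `f b` not
yet matched, for the last letter `b` of `w` read, and the next letter of `w` is read only when the
buffer is empty. The grammar `g.comap f` has nonterminals `(q, X, q')` deriving the pieces of `w`
read while a word derived from `X` is matched, starting with buffer `q` and ending with buffer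
`q'`. A rule `X → X₁ ⋯ Xₙ` of `g` becomes `(q₀, X, qₙ) → (q₀, X₁, q₁) ⋯ (qₙ₋₁, Xₙ, qₙ)` for all
buffers `qᵢ`, of which there are finitely many: the suffixes of the words `f b`. Letters of
empty image after the last matched letter are derived from a separate nonterminal `junk`.
-/

theorem Set.Finite.setOf_length_eq_forall_mem {γ : Type*} {S : Set γ} (hS : S.Finite) (n : ℕ) :
    {l : List γ | l.length = n ∧ ∀ x ∈ l, x ∈ S}.Finite := by
  have := hS.to_subtype
  refine ((List.finite_length_eq S n).image (List.map (↑))).subset ?_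
  rintro l ⟨rfl, hl⟩
  lift l to List S using hl
  exact ⟨l, by simp, rfl⟩

theorem Set.Finite.setOf_map_fst_eq {γ δ : Type*} {S : Set δ} (hS : S.Finite) (s : List γ) :
    {l : List (γ × δ) | l.map Prod.fst = s ∧ ∀ x ∈ l, x.2 ∈ S}.Finite := by
  refine ((List.finite_toSet s).prod hS |>.setOf_length_eq_forall_mem s.length).subset ?_
  rintro l ⟨rfl, hl⟩
  exact ⟨by simp, fun x hx => ⟨List.mem_map_of_mem hx, hl x hx⟩⟩

namespace ContextFreeGrammar

theorem Derives.eq_of_map_terminal {T : Type*} {g : ContextFreeGrammar T} {z : List T}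
    {v : List (Symbol T g.NT)} (h : g.Derives (z.map .terminal) v) : v = z.map .terminal := by
  rcases h.eq_or_head with rfl | ⟨_, hp, -⟩
  · rfl
  · obtain ⟨r, -, hr⟩ := hp.exists_nonterminal_input_mem
    simp at hr

variable {α β : Type}

section Buffer

variable (f : β → List α)

inductive BufferStep : List α → α → List β → List α → Prop
  | consume (a : α) (q : List α) : BufferStep (a :: q) a [] q
  | emit (b : β) {a : α} {w : List β} {q : List α} :
      BufferStep (f b) a w q → BufferStep [] a (b :: w) q

inductive BufferRun : List α → List α → List β → List α → Prop
  | nil (q : List α) : BufferRun q [] [] q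
  | cons {q q₁ q₂ : List α} {a : α} {z : List α} {w₁ w₂ : List β} :
      BufferStep f q a w₁ q₁ → BufferRun q₁ z w₂ q₂ → BufferRun q (a :: z) (w₁ ++ w₂) q₂

variable {f} {q q' q'' z z' : List α} {a : α} {w w' : List β}

theorem BufferStep.append_flatMap (h : BufferStep f q a w q') :
    q ++ w.flatMap f = a :: q' := by
  induction h with
  | consume => simp
  | emit b _ ih => simpa using ih

theorem BufferRun.append_flatMap (h : BufferRun f q z w q') : q ++ w.flatMap f = z ++ q' := by
  induction h with
  | nil => simp
  | cons hs _ ih =>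
    rw [List.flatMap_append, ← List.append_assoc, hs.append_flatMap]
    simpa using ih

theorem BufferRun.trans (h : BufferRun f q z w q') (h' : BufferRun f q' z' w' q'') :
    BufferRun f q (z ++ z') (w ++ w') q'' := by
  induction h with
  | nil => simpa using h'
  | cons hs _ ih => simpa using BufferRun.cons hs (ih h')

theorem bufferRun_singleton_iff : BufferRun f q [a] w q' ↔ BufferStep f q a w q' :=
  ⟨by rintro (_ | ⟨hs, ⟨⟩⟩); simpa using hs, fun h => by simpa using BufferRun.cons h (.nil q')⟩

variable (f) in
theorem bufferRun_self (z : List α) : BufferRun f z z [] [] := by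
  induction z with
  | nil => exact .nil []
  | cons a z ih => simpa using BufferRun.cons (.consume a z) ih

theorem bufferRun_image {b : β} (hb : f b ≠ []) : BufferRun f [] (f b) [b] [] := by
  obtain ⟨a, q, hbq⟩ := List.exists_cons_of_ne_nil hb
  simpa [hbq] using BufferRun.cons (.emit b (hbq ▸ .consume a q)) (bufferRun_self f q)

theorem BufferRun.cons_of_image_eq_nil {b : β} (hb : f b = []) (h : BufferRun f [] z w q')
    (hz : z ≠ []) : BufferRun f [] z (b :: w) q' := by
  cases h with
  | nil => contradiction
  | cons hs hr => exact .cons (.emit b (hb ▸ hs)) hr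

variable (f) in
theorem exists_bufferRun (w : List β) :
    ∃ w₁ w₂, w = w₁ ++ w₂ ∧ w₂.flatMap f = [] ∧ BufferRun f [] (w.flatMap f) w₁ [] := by
  induction w with
  | nil => exact ⟨[], [], rfl, rfl, .nil []⟩
  | cons b w ih =>
    obtain ⟨w₁, w₂, rfl, hw₂, hrun⟩ := ih
    by_cases hb : f b = []
    · rcases eq_or_ne w₁ [] with rfl | hw₁
      · refine ⟨[], b :: w₂, rfl, by simp [hb, hw₂], ?_⟩
        simpa [hb, hw₂] using BufferRun.nil (f := f) []
      · have hz : (w₁ ++ w₂).flatMap f ≠ [] := by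
          intro h
          rw [h] at hrun
          cases hrun
          exact hw₁ rfl
        exact ⟨b :: w₁, w₂, rfl, hw₂, by simpa [hb] using hrun.cons_of_image_eq_nil hb hz⟩
    · exact ⟨b :: w₁, w₂, rfl, hw₂, by simpa using (bufferRun_image hb).trans hrun⟩

variable (f) in
def bufferStates : Set (List α) := insert [] (⋃ b, {q | q <:+ f b})

variable (f) in
theorem nil_mem_bufferStates : [] ∈ bufferStates f := Set.mem_insert _ _

variable (f) in
theorem image_mem_bufferStates (b : β) : f b ∈ bufferStates f :=
  Set.mem_insert_of_mem _ (Set.mem_iUnion.2 ⟨b, List.suffix_refl _⟩)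

theorem mem_bufferStates_of_suffix (h : q' <:+ q) (hq : q ∈ bufferStates f) :
    q' ∈ bufferStates f := by
  simp only [bufferStates, Set.mem_insert_iff, Set.mem_iUnion, Set.mem_ofPred_eq] at hq ⊢
  rcases hq with rfl | ⟨b, hb⟩
  · exact Or.inl (List.suffix_nil.1 h)
  · exact Or.inr ⟨b, h.trans hb⟩

variable (f) in
theorem finite_bufferStates [Finite β] : (bufferStates f).Finite :=
  (Set.finite_iUnion fun b => (List.finite_toSet (f b).tails).subset
    fun q hq => (List.mem_tails q (f b)).2 hq).insert []

theorem BufferStep.mem_bufferStates (h : BufferStep f q a w q') (hq : q ∈ bufferStates f) :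
    q' ∈ bufferStates f := by
  induction h with
  | consume a q => exact mem_bufferStates_of_suffix (List.suffix_cons a q) hq
  | emit b _ ih => exact ih (image_mem_bufferStates f b)

theorem BufferRun.mem_bufferStates (h : BufferRun f q z w q') (hq : q ∈ bufferStates f) :
    q' ∈ bufferStates f := by
  induction h with
  | nil => exact hq
  | cons hs _ ih => exact ih (hs.mem_bufferStates hq)

end Buffer

section Comap

variable (f : β → List α)

inductive ComapNT (α N : Type)
  | start
  | junk
  | triple (q : List α) (s : Symbol α N) (q' : List α)

variable {N : Type}

/-- `(s₁, q₁) … (sₙ, qₙ)` becomes `(q, s₁, q₁) (q₁, s₂, q₂) … (qₙ₋₁, sₙ, qₙ)`. -/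
def liftSymbols : List α → List (Symbol α N × List α) → List (Symbol β (ComapNT α N))
  | _, [] => []
  | q, (s, q') :: l => .nonterminal (.triple q s q') :: liftSymbols q' l

def endState : List α → List (Symbol α N × List α) → List α
  | q, [] => q
  | _, (_, q') :: l => endState q' l

@[simp] theorem liftSymbols_nil (q : List α) : liftSymbols (β := β) (N := N) q [] = [] := rfl

@[simp] theorem liftSymbols_cons (q q' : List α) (s : Symbol α N) (l : List (Symbol α N × List α)) :
    liftSymbols (β := β) q ((s, q') :: l) = .nonterminal (.triple q s q') :: liftSymbols q' l :=
  rfl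

@[simp] theorem endState_nil (q : List α) : endState (N := N) q [] = q := rfl

@[simp] theorem endState_cons (q q' : List α) (s : Symbol α N) (l : List (Symbol α N × List α)) :
    endState q ((s, q') :: l) = endState q' l := rfl

@[simp] theorem endState_append (q : List α) (l₁ l₂ : List (Symbol α N × List α)) :
    endState q (l₁ ++ l₂) = endState (endState q l₁) l₂ := by
  induction l₁ generalizing q with
  | nil => rfl
  | cons x l₁ ih => exact ih x.2

@[simp] theorem liftSymbols_append (q : List α) (l₁ l₂ : List (Symbol α N × List α)) :
    liftSymbols (β := β) q (l₁ ++ l₂) = liftSymbols q l₁ ++ liftSymbols (endState q l₁) l₂ := by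
  induction l₁ generalizing q with
  | nil => rfl
  | cons x l₁ ih => exact congrArg (_ :: ·) (ih x.2)

theorem endState_mem_bufferStates {q : List α} {l : List (Symbol α N × List α)}
    (hq : q ∈ bufferStates f) (hl : ∀ x ∈ l, x.2 ∈ bufferStates f) :
    endState q l ∈ bufferStates f := by
  induction l generalizing q with
  | nil => exact hq
  | cons x l ih => exact ih (hl x (by simp)) fun y hy => hl y (by simp [hy])

variable (g : ContextFreeGrammar α)

inductive ComapRule : ContextFreeRule β (ComapNT α g.NT) → Prop
  | start : ComapRule
      ⟨.start, [.nonterminal (.triple [] (.nonterminal g.initial) []), .nonterminal .junk]⟩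
  | junk_nil : ComapRule ⟨.junk, []⟩
  | junk_cons {b : β} (hb : f b = []) : ComapRule ⟨.junk, [.terminal b, .nonterminal .junk]⟩
  | consume {a : α} {q : List α} (hq : a :: q ∈ bufferStates f) :
      ComapRule ⟨.triple (a :: q) (.terminal a) q, []⟩
  | emit (b : β) (a : α) {q : List α} (hq : q ∈ bufferStates f) :
      ComapRule ⟨.triple [] (.terminal a) q,
        [.terminal b, .nonterminal (.triple (f b) (.terminal a) q)]⟩
  | expand {r : ContextFreeRule α g.NT} (hr : r ∈ g.rules) {q : List α} (hq : q ∈ bufferStates f)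
      {l : List (Symbol α g.NT × List α)} (hl : l.map Prod.fst = r.output)
      (hlq : ∀ x ∈ l, x.2 ∈ bufferStates f) :
      ComapRule ⟨.triple q (.nonterminal r.input) (endState q l), liftSymbols q l⟩

theorem finite_setOf_comapRule [Finite α] [Finite β] : {r | ComapRule f g r}.Finite := by
  have hS := finite_bufferStates f
  let cover : Set (ContextFreeRule β (ComapNT α g.NT)) :=
    {⟨.start, [.nonterminal (.triple [] (.nonterminal g.initial) []), .nonterminal .junk]⟩,
      ⟨.junk, []⟩} ∪
    Set.range (fun b => ⟨.junk, [.terminal b, .nonterminal .junk]⟩) ∪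
    (fun p : α × List α => ⟨.triple (p.1 :: p.2) (.terminal p.1) p.2, []⟩) ''
      (Set.univ ×ˢ bufferStates f) ∪
    (fun p : β × α × List α => ⟨.triple [] (.terminal p.2.1) p.2.2,
        [.terminal p.1, .nonterminal (.triple (f p.1) (.terminal p.2.1) p.2.2)]⟩) ''
      (Set.univ ×ˢ Set.univ ×ˢ bufferStates f) ∪
    ⋃ r ∈ (g.rules : Set (ContextFreeRule α g.NT)), ⋃ q ∈ bufferStates f,
      (fun l => ⟨.triple q (.nonterminal r.input) (endState q l), liftSymbols q l⟩) ''
        {l | l.map Prod.fst = r.output ∧ ∀ x ∈ l, x.2 ∈ bufferStates f}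
  have hcover : cover.Finite :=
    (((((Set.toFinite _).union (Set.finite_range _)).union
      ((Set.finite_univ.prod hS).image _)).union
      ((Set.finite_univ.prod (Set.finite_univ.prod hS)).image _)).union
      (g.rules.finite_toSet.biUnion fun r _ =>
        hS.biUnion fun q _ => (hS.setOf_map_fst_eq r.output).image _))
  refine hcover.subset ?_
  rintro _ (_ | _ | ⟨hb⟩ | ⟨hq⟩ | ⟨b, a, hq⟩ | ⟨hr, hq, hl, hlq⟩)
  · simp [cover]
  · simp [cover]
  · simp [cover]
  · simp [cover, mem_bufferStates_of_suffix (List.suffix_cons _ _) hq]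
  · simp [cover, hq]
  · simp only [cover, Set.mem_union, Set.mem_iUnion]
    exact Or.inr ⟨_, hr, _, hq, _, ⟨hl, hlq⟩, rfl⟩

variable [Finite α] [Finite β]

noncomputable abbrev comap : ContextFreeGrammar β :=
  ⟨ComapNT α g.NT, .start, (finite_setOf_comapRule f g).toFinset⟩

variable {f g}

theorem ComapRule.produces {r : ContextFreeRule β (ComapNT α g.NT)} (hr : ComapRule f g r) :
    (g.comap f).Produces [.nonterminal r.input] r.output :=
  ⟨r, (Set.Finite.mem_toFinset _).2 hr, .input_output⟩

end Comap

section Soundness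

variable (f : β → List α) (g : ContextFreeGrammar α)

/-- The meaning of the symbols of `g.comap f` that all its derivations respect. -/
def Denotes : Symbol β (ComapNT α g.NT) → List β → Prop
  | .terminal b, w => w = [b]
  | .nonterminal .start, w => w.flatMap f ∈ g.language
  | .nonterminal .junk, w => w.flatMap f = []
  | .nonterminal (.triple q s q'), w =>
      ∃ z, g.Derives [s] (z.map .terminal) ∧ BufferRun f q z w q'

inductive DenotesList : List (Symbol β (ComapNT α g.NT)) → List β → Prop
  | nil : DenotesList [] []
  | cons {s : Symbol β (ComapNT α g.NT)} {l : List (Symbol β (ComapNT α g.NT))} {w₁ w₂ : List β} :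
      Denotes f g s w₁ → DenotesList l w₂ → DenotesList (s :: l) (w₁ ++ w₂)

variable {f g} {l l₁ l₂ : List (Symbol β (ComapNT α g.NT))} {w w₁ w₂ : List β}

theorem DenotesList.append (h₁ : DenotesList f g l₁ w₁) (h₂ : DenotesList f g l₂ w₂) :
    DenotesList f g (l₁ ++ l₂) (w₁ ++ w₂) := by
  induction h₁ with
  | nil => exact h₂
  | cons hs _ ih => simpa using DenotesList.cons hs ih

theorem DenotesList.exists_of_append (h : DenotesList f g (l₁ ++ l₂) w) :
    ∃ w₁ w₂, w = w₁ ++ w₂ ∧ DenotesList f g l₁ w₁ ∧ DenotesList f g l₂ w₂ := by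
  induction l₁ generalizing w with
  | nil => exact ⟨[], w, rfl, .nil, h⟩
  | cons s l₁ ih =>
    obtain _ | ⟨hs, hl⟩ := h
    obtain ⟨w₁, w₂, rfl, h₁, h₂⟩ := ih hl
    exact ⟨_ ++ w₁, w₂, by simp, .cons hs h₁, h₂⟩

theorem denotesList_singleton_iff {s : Symbol β (ComapNT α g.NT)} :
    DenotesList f g [s] w ↔ Denotes f g s w :=
  ⟨by rintro (_ | ⟨hs, ⟨⟩⟩); simpa using hs, fun h => by simpa using DenotesList.cons h .nil⟩

theorem denotesList_map_terminal (w : List β) : DenotesList f g (w.map .terminal) w := by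
  induction w with
  | nil => exact .nil
  | cons b w ih => exact DenotesList.cons (w₁ := [b]) rfl ih

theorem denotes_triple_terminal_iff {q q' : List α} {a : α} :
    Denotes f g (.nonterminal (.triple q (.terminal a) q')) w ↔ BufferStep f q a w q' := by
  refine ⟨?_, fun h => ⟨[a], .refl _, bufferRun_singleton_iff.2 h⟩⟩
  rintro ⟨z, hz, hrun⟩
  have hz' : z.map Symbol.terminal = [.terminal a] := Derives.eq_of_map_terminal (z := [a]) hz
  obtain ⟨_, rfl, ⟨⟩⟩ := List.map_eq_singleton_iff.1 hz'
  exact bufferRun_singleton_iff.1 hrun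

theorem DenotesList.exists_derives_of_liftSymbols {q : List α} {l : List (Symbol α g.NT × List α)}
    (h : DenotesList f g (liftSymbols q l) w) :
    ∃ z, g.Derives (l.map Prod.fst) (z.map .terminal) ∧ BufferRun f q z w (endState q l) := by
  induction l generalizing q w with
  | nil =>
    rw [liftSymbols_nil] at h
    cases h
    exact ⟨[], .refl _, .nil q⟩
  | cons x l ih =>
    obtain _ | ⟨⟨z₁, hd₁, hr₁⟩, hl⟩ := h
    obtain ⟨z₂, hd₂, hr₂⟩ := ih hl
    refine ⟨z₁ ++ z₂, ?_, hr₁.trans hr₂⟩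
    simpa using (hd₁.append_right _).trans (hd₂.append_left _)

theorem ComapRule.denotes_input {r : ContextFreeRule β (ComapNT α g.NT)} (hr : ComapRule f g r)
    (hw : DenotesList f g r.output w) : Denotes f g (.nonterminal r.input) w := by
  cases hr with
  | start =>
    obtain _ | ⟨⟨z, hz, hrun⟩, _ | ⟨(hjunk : List.flatMap f _ = []), _ | _⟩⟩ := hw
    have hw₁ := hrun.append_flatMap
    simp only [List.nil_append, List.append_nil] at hw₁
    simpa [Denotes, hjunk, hw₁] using hz
  | junk_nil => cases hw; rfl
  | junk_cons hb =>
    obtain _ | ⟨rfl, _ | ⟨hjunk, _ | _⟩⟩ := hw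
    simpa [Denotes, hb] using hjunk
  | consume => cases hw; exact denotes_triple_terminal_iff.2 (.consume _ _)
  | emit b a =>
    obtain _ | ⟨rfl, _ | ⟨hstep, _ | _⟩⟩ := hw
    have hstep' := BufferStep.emit b (denotes_triple_terminal_iff.1 hstep)
    exact denotes_triple_terminal_iff.2 (by simpa using hstep')
  | expand hr _ hl =>
    obtain ⟨z, hz, hrun⟩ := hw.exists_derives_of_liftSymbols
    exact ⟨z, Produces.trans_derives ⟨_, hr, .input_output⟩ (hl ▸ hz), hrun⟩

variable [Finite α] [Finite β]

theorem DenotesList.of_produces {u v : List (Symbol β (ComapNT α g.NT))}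
    (huv : (g.comap f).Produces u v) (hv : DenotesList f g v w) : DenotesList f g u w := by
  obtain ⟨r, hr, hrw⟩ := huv
  obtain ⟨p, t, rfl, rfl⟩ := hrw.exists_parts
  obtain ⟨w', wt, rfl, hw', ht⟩ := hv.exists_of_append
  obtain ⟨wp, wo, rfl, hp, ho⟩ := hw'.exists_of_append
  have hinput := ((Set.Finite.mem_toFinset _).1 hr).denotes_input ho
  exact (hp.append (denotesList_singleton_iff.2 hinput)).append ht

theorem flatMap_mem_language_of_mem_comap (hw : w ∈ (g.comap f).language) :
    w.flatMap f ∈ g.language := by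
  have h := hw.head_induction_on (motive := fun u _ => DenotesList f g u w)
    (denotesList_map_terminal w) fun huv _ ih => ih.of_produces huv
  exact denotesList_singleton_iff.1 h

end Soundness

section Completeness

variable [Finite α] [Finite β] {f : β → List α} {g : ContextFreeGrammar α}
  {q q' : List α} {z : List α} {w : List β}

theorem BufferStep.comap_derives {a : α} (h : BufferStep f q a w q') (hq : q ∈ bufferStates f) :
    (g.comap f).Derives [.nonterminal (.triple q (.terminal a) q')] (w.map .terminal) := by
  induction h with
  | consume a q => exact (ComapRule.consume hq).produces.single
  | emit b h ih =>
    have hb := image_mem_bufferStates f b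
    refine (ComapRule.emit (g := g) b _ (h.mem_bufferStates hb)).produces.trans_derives ?_
    simpa using (ih hb).append_left [.terminal b]

theorem BufferRun.exists_comap_derives (h : BufferRun f q z w q') (hq : q ∈ bufferStates f) :
    ∃ l : List (Symbol α g.NT × List α), l.map Prod.fst = z.map .terminal ∧
      (∀ x ∈ l, x.2 ∈ bufferStates f) ∧ endState q l = q' ∧
      (g.comap f).Derives (liftSymbols q l) (w.map .terminal) := by
  induction h with
  | nil q => exact ⟨[], rfl, by simp, rfl, .refl _⟩
  | @cons q q₁ _ a _ w₁ _ hs _ ih =>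
    have hq₁ := hs.mem_bufferStates hq
    obtain ⟨l, hl, hlq, hend, hder⟩ := ih hq₁
    refine ⟨(.terminal a, q₁) :: l, by simp [hl], by simpa [hq₁] using hlq, hend, ?_⟩
    simpa using ((hs.comap_derives hq).append_right _).trans (hder.append_left (w₁.map .terminal))

theorem Produces.exists_comap_produces {s s' : List (Symbol α g.NT)} (h : g.Produces s s')
    (hq : q ∈ bufferStates f) {l' : List (Symbol α g.NT × List α)} (hl' : l'.map Prod.fst = s')
    (hl'q : ∀ x ∈ l', x.2 ∈ bufferStates f) :
    ∃ l : List (Symbol α g.NT × List α), l.map Prod.fst = s ∧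
      (∀ x ∈ l, x.2 ∈ bufferStates f) ∧ endState q l = endState q l' ∧
      (g.comap f).Produces (liftSymbols q l) (liftSymbols q l') := by
  obtain ⟨r, hr, hrw⟩ := h
  obtain ⟨p, t, rfl, rfl⟩ := hrw.exists_parts
  obtain ⟨l'', lt, rfl, hl'', rfl⟩ := List.map_eq_append_iff.1 hl'
  obtain ⟨lp, lo, rfl, rfl, hlo⟩ := List.map_eq_append_iff.1 hl''
  simp only [List.mem_append] at hl'q
  have hqp := endState_mem_bufferStates f hq fun x hx => hl'q x (.inl (.inl hx))
  have hqo := endState_mem_bufferStates f hqp fun x hx => hl'q x (.inl (.inr hx))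
  refine ⟨lp ++ [(.nonterminal r.input, endState (endState q lp) lo)] ++ lt, by simp, ?_,
    by simp, ?_⟩
  · simp only [List.mem_append, List.mem_singleton]
    rintro x ((hx | rfl) | hx)
    exacts [hl'q x (.inl (.inl hx)), hqo, hl'q x (.inr hx)]
  · have hrule := ComapRule.expand hr hqp hlo fun x hx => hl'q x (.inl (.inr hx))
    simpa using (hrule.produces.append_right (liftSymbols _ lt)).append_left (liftSymbols q lp)

theorem Derives.exists_comap_derives {s : List (Symbol α g.NT)} (h : g.Derives s (z.map .terminal))
    (hrun : BufferRun f q z w q') (hq : q ∈ bufferStates f) :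
    ∃ l : List (Symbol α g.NT × List α), l.map Prod.fst = s ∧
      (∀ x ∈ l, x.2 ∈ bufferStates f) ∧ endState q l = q' ∧
      (g.comap f).Derives (liftSymbols q l) (w.map .terminal) := by
  induction h using Relation.ReflTransGen.head_induction_on with
  | refl => exact hrun.exists_comap_derives hq
  | head hp _ ih =>
    obtain ⟨l', hl', hl'q, hend', hder⟩ := ih
    obtain ⟨l, hl, hlq, hend, hprod⟩ := hp.exists_comap_produces hq hl' hl'q
    exact ⟨l, hl, hlq, hend.trans hend', hprod.trans_derives hder⟩

theorem comap_derives_junk (hw : w.flatMap f = []) :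
    (g.comap f).Derives [.nonterminal .junk] (w.map .terminal) := by
  induction w with
  | nil => exact ComapRule.junk_nil.produces.single
  | cons b w ih =>
    rw [List.flatMap_cons, List.append_eq_nil_iff] at hw
    refine (ComapRule.junk_cons (g := g) hw.1).produces.trans_derives ?_
    simpa using (ih hw.2).append_left [.terminal b]

theorem mem_comap_language_of_flatMap_mem (hw : w.flatMap f ∈ g.language) :
    w ∈ (g.comap f).language := by
  obtain ⟨w₁, w₂, rfl, hw₂, hrun⟩ := exists_bufferRun f w
  obtain ⟨l, hl, -, hend, hder⟩ := Derives.exists_comap_derives hw hrun (nil_mem_bufferStates f)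
  obtain ⟨⟨_, q⟩, rfl, rfl⟩ := List.map_eq_singleton_iff.1 hl
  obtain rfl : q = [] := hend
  refine ComapRule.start.produces.trans_derives ?_
  simpa using (hder.append_right _).trans ((comap_derives_junk hw₂).append_left (w₁.map .terminal))

variable (f g) in
theorem language_comap : (g.comap f).language = {w | w.flatMap f ∈ g.language} :=
  Set.ext fun _ => ⟨flatMap_mem_language_of_mem_comap, mem_comap_language_of_flatMap_mem⟩

end Completeness

end ContextFreeGrammar

theorem Language.IsContextFree.comap {α β : Type} [Finite α] [Finite β] {L : Language α}
    (hL : L.IsContextFree) (f : β → List α) :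
    Language.IsContextFree {w : List β | w.flatMap f ∈ L} := by
  obtain ⟨g, rfl⟩ := hL
  exact ⟨g.comap f, g.language_comap f⟩

theorem contextFree_restrict_to_subgroup_general
    {G : Type} [Group G] (K : Subgroup G)
    {α : Type} [Fintype α] (ψ : α → G)
    (hψ : ∀ g : G, ∃ w : List α, (w.map ψ).prod = g)
    (hcf : Language.IsContextFree {w : List α | (w.map ψ).prod ∈ K})
    (H : Subgroup G)
    {β : Type} [Fintype β] (ψ' : β → H) :
    Language.IsContextFree {w : List β | ((w.map ψ').prod : G) ∈ K ⊓ H} := by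
  choose u hu using hψ
  have hprod (w : List β) :
      ((w.flatMap fun b => u (ψ' b)).map ψ).prod = ((w.map ψ').prod : G) := by
    induction w with
    | nil => simp
    | cons b w ih => simp [ih, hu]
  have hL : {w : List β | ((w.map ψ').prod : G) ∈ K ⊓ H} =
      {w | (w.flatMap fun b => u (ψ' b)) ∈ {v : List α | (v.map ψ).prod ∈ K}} := by
    ext w
    simp only [Set.mem_ofPred_eq, hprod, Subgroup.mem_inf, SetLike.coe_mem, and_true]
  exact hL ▸ hcf.comap _

/-- If `L(G,K,ψ)` is context-free and `H ≤ G` is a finitely generated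
subgroup with semigroup presentation `ψ' : β → H`, then `L(H, K ⊓ H, ψ')` is context-free. -/
theorem contextFree_restrict_to_subgroup
    {G : Type} [Group G] [Group.FG G] (K : Subgroup G)
    {α : Type} [Fintype α] (ψ : α → G)
    (hψ : ∀ g : G, ∃ w : List α, (w.map ψ).prod = g)
    (hcf : Language.IsContextFree {w : List α | (w.map ψ).prod ∈ K})
    (H : Subgroup G) (hH : H.FG)
    {β : Type} [Fintype β] (ψ' : β → H)
    (hψ' : ∀ h : H, ∃ w : List β, (w.map ψ').prod = h) :
    Language.IsContextFree {w : List β | ((w.map ψ').prod : G) ∈ K ⊓ H} :=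
  contextFree_restrict_to_subgroup_general K ψ hψ hcf H ψ'
end

section
/- Let G be a finitely generated group and K a subgroup of G. If for some finite alphabet Σ and semigroup presentation ψ : Σ → G the word problem L(G,K,ψ) is a context-free language, then for every finite alphabet Σ' and every semigroup presentation ψ' : Σ' → G the word problem L(G,K,ψ') is also context-free. Hence being context-free is a property of the pair (G,K) that does not depend on the choice of alphabet Σ and map ψ : Σ → G whose image generates G as a semigroup. -/
/-!
Choose for every letter `b` of `β` a nonempty word `c b` over `α` with value `ψ' b` in `G`: the
letter `a` followed by a word for `(ψ a)⁻¹ * ψ' b`. The word problem for `ψ'` is then the preimage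
of the word problem for `ψ` under `w ↦ w.flatMap c`, and context-free languages are closed under
inverse homomorphisms with nonempty images. If `α` is empty, `G` is trivial and every word lies in
the word problem.

The closure is the classical reduction `c⁻¹(L) = h(σ⁻¹(L) ∩ R)`: tag the first letter of each block
`c b` with `b` and the other letters with nothing; `σ` forgets the tags, `R` is the regular language
of concatenations of tagged blocks, and `h` keeps only the tags. Context-free languages are closed
under `σ⁻¹(·) ∩ R` by the triple construction of Bar-Hillel, Perles and Shamir, and under
homomorphisms by substituting into the rules.
-/

open ContextFreeGrammar

section ListSat

variable {T N : Type*} (P : N → List T → Prop)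

def Symbol.Sat : Symbol T N → List T → Prop
  | .terminal t, v => v = [t]
  | .nonterminal n, v => P n v

def Symbol.ListSat : List (Symbol T N) → List T → Prop
  | [], v => v = []
  | x :: xs, v => ∃ v₁ v₂, v = v₁ ++ v₂ ∧ Symbol.Sat P x v₁ ∧ Symbol.ListSat xs v₂

variable {P}

namespace Symbol

lemma listSat_append {u₁ u₂ : List (Symbol T N)} {v : List T} :
    ListSat P (u₁ ++ u₂) v ↔ ∃ v₁ v₂, v = v₁ ++ v₂ ∧ ListSat P u₁ v₁ ∧ ListSat P u₂ v₂ := by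
  induction u₁ generalizing v with
  | nil => simp [ListSat]
  | cons x xs ih =>
    simp only [List.cons_append, ListSat, ih]
    constructor
    · rintro ⟨v₁, _, rfl, hx, w₁, w₂, rfl, hw₁, hw₂⟩
      exact ⟨v₁ ++ w₁, w₂, by simp, ⟨v₁, w₁, rfl, hx, hw₁⟩, hw₂⟩
    · rintro ⟨_, v₂, rfl, ⟨w₁, w₂, rfl, hx, hw⟩, h₂⟩
      exact ⟨w₁, w₂ ++ v₂, by simp, hx, w₂, v₂, rfl, hw, h₂⟩

lemma listSat_singleton {x : Symbol T N} {v : List T} : ListSat P [x] v ↔ Sat P x v := by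
  simp [ListSat]

lemma listSat_map_terminal {w v : List T} : ListSat P (w.map terminal) v ↔ v = w := by
  induction w generalizing v with
  | nil => rfl
  | cons t w ih =>
    simp only [List.map_cons, ListSat, Sat, ih]
    constructor
    · rintro ⟨_, _, rfl, rfl, rfl⟩; rfl
    · rintro rfl; exact ⟨[t], w, rfl, rfl, rfl⟩

end Symbol

end ListSat

namespace ContextFreeGrammar

variable {T : Type*} {g : ContextFreeGrammar T}

lemma Derives.append {u₁ u₂ v₁ v₂ : List (Symbol T g.NT)}
    (h₁ : g.Derives u₁ v₁) (h₂ : g.Derives u₂ v₂) : g.Derives (u₁ ++ u₂) (v₁ ++ v₂) :=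
  (h₁.append_right u₂).trans (h₂.append_left v₁)

lemma listSat_of_derives {P : g.NT → List T → Prop}
    (hP : ∀ r ∈ g.rules, ∀ v, Symbol.ListSat P r.output v → P r.input v)
    {u : List (Symbol T g.NT)} {v : List T} (h : g.Derives u (v.map Symbol.terminal)) :
    Symbol.ListSat P u v := by
  induction h using Relation.ReflTransGen.head_induction_on with
  | refl => exact Symbol.listSat_map_terminal.mpr rfl
  | head hp _ ih =>
    obtain ⟨r, hr, hrw⟩ := hp
    obtain ⟨p, q, rfl, rfl⟩ := hrw.exists_parts
    obtain ⟨_, v₃, rfl, h₁₂, h₃⟩ := Symbol.listSat_append.mp ih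
    obtain ⟨v₁, v₂, rfl, h₁, h₂⟩ := Symbol.listSat_append.mp h₁₂
    exact Symbol.listSat_append.mpr ⟨_, v₃, rfl,
      Symbol.listSat_append.mpr ⟨v₁, v₂, rfl, h₁, Symbol.listSat_singleton.mpr (hP r hr v₂ h₂)⟩, h₃⟩

lemma of_mem_language {P : g.NT → List T → Prop}
    (hP : ∀ r ∈ g.rules, ∀ v, Symbol.ListSat P r.output v → P r.input v)
    {w : List T} (hw : w ∈ g.language) : P g.initial w :=
  Symbol.listSat_singleton.mp (listSat_of_derives hP hw)

end ContextFreeGrammar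

namespace Symbol

variable {T T' N : Type*}

def flatMapTerminal (o : T → List T') : Symbol T N → List (Symbol T' N)
  | .terminal t => (o t).map terminal
  | .nonterminal n => [nonterminal n]

lemma flatMap_flatMapTerminal_map_terminal (o : T → List T') (w : List T) :
    (w.map terminal).flatMap (flatMapTerminal (N := N) o) = (w.flatMap o).map terminal := by
  simp [List.flatMap_map, List.map_flatMap, flatMapTerminal]

end Symbol

namespace ContextFreeGrammar

variable {T T' : Type*} (g : ContextFreeGrammar T) (o : T → List T')

open Classical in
noncomputable abbrev flatMapTerminals : ContextFreeGrammar T' where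
  NT := g.NT
  initial := g.initial
  rules := g.rules.image fun r => ⟨r.input, r.output.flatMap (Symbol.flatMapTerminal o)⟩

variable {g o}

lemma Produces.flatMapTerminals {u v : List (Symbol T g.NT)} (h : g.Produces u v) :
    (g.flatMapTerminals o).Produces (u.flatMap (Symbol.flatMapTerminal o))
      (v.flatMap (Symbol.flatMapTerminal o)) := by
  classical
  obtain ⟨r, hr, hrw⟩ := h
  obtain ⟨p, q, rfl, rfl⟩ := hrw.exists_parts
  refine ⟨_, Finset.mem_image_of_mem _ hr, ?_⟩
  convert ContextFreeRule.rewrites_of_exists_parts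
    ⟨r.input, r.output.flatMap (Symbol.flatMapTerminal o)⟩
    (p.flatMap (Symbol.flatMapTerminal o)) (q.flatMap (Symbol.flatMapTerminal o)) using 1 <;>
    simp [Symbol.flatMapTerminal]

lemma Derives.flatMapTerminals {u v : List (Symbol T g.NT)} (h : g.Derives u v) :
    (g.flatMapTerminals o).Derives (u.flatMap (Symbol.flatMapTerminal o))
      (v.flatMap (Symbol.flatMapTerminal o)) := by
  induction h with
  | refl => rfl
  | tail _ hp ih => exact ih.trans_produces hp.flatMapTerminals

lemma exists_derives_of_listSat_flatMapTerminal (u : List (Symbol T g.NT)) {x : List T'}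
    (hx : Symbol.ListSat (fun n x => ∃ v : List T,
        g.Derives [.nonterminal n] (v.map .terminal) ∧ v.flatMap o = x)
      (u.flatMap (Symbol.flatMapTerminal o)) x) :
    ∃ v : List T, g.Derives u (v.map .terminal) ∧ v.flatMap o = x := by
  induction u generalizing x with
  | nil => exact ⟨[], .refl _, (show x = [] from hx).symm⟩
  | cons s u ih =>
    rw [List.flatMap_cons, Symbol.listSat_append] at hx
    obtain ⟨x₁, x₂, rfl, hx₁, hx₂⟩ := hx
    obtain ⟨v₂, hd₂, rfl⟩ := ih hx₂
    obtain ⟨v₁, hd₁, rfl⟩ :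
        ∃ v₁ : List T, g.Derives [s] (v₁.map .terminal) ∧ v₁.flatMap o = x₁ := by
      cases s with
      | terminal t =>
        exact ⟨[t], .refl _, by simpa using (Symbol.listSat_map_terminal.mp hx₁).symm⟩
      | nonterminal n => exact Symbol.listSat_singleton.mp hx₁
    exact ⟨v₁ ++ v₂, by simpa using hd₁.append hd₂, by simp⟩

theorem language_flatMapTerminals :
    (g.flatMapTerminals o).language = (·.flatMap o) '' g.language := by
  classical
  ext x
  constructor
  · intro hx
    refine of_mem_language (P := fun n (x : List T') => ∃ v : List T,
      g.Derives [.nonterminal n] (v.map .terminal) ∧ v.flatMap o = x) (fun r' hr' x hx => ?_) hx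
    obtain ⟨r, hr, rfl⟩ := Finset.mem_image.mp hr'
    obtain ⟨v, hv, rfl⟩ := exists_derives_of_listSat_flatMapTerminal r.output hx
    exact ⟨v, .head ⟨r, hr, .input_output⟩ hv, rfl⟩
  · rintro ⟨v, hv, rfl⟩
    have h := Derives.flatMapTerminals (o := o) hv
    rwa [Symbol.flatMap_flatMapTerminal_map_terminal] at h

end ContextFreeGrammar

theorem Language.IsContextFree.image_flatMap {T T' : Type*} {L : Language T}
    (hL : L.IsContextFree) (o : T → List T') :
    Language.IsContextFree ((fun w : List T => w.flatMap o) '' L) := by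
  obtain ⟨g, rfl⟩ := hL
  exact ⟨g.flatMapTerminals o, g.language_flatMapTerminals⟩

namespace ContextFreeGrammar

variable {α γ Q N : Type}

open Classical in
noncomputable def annotations [Fintype Q] :
    Q → List (Symbol α N) → Q → Finset (List (Symbol γ (Option (Q × Symbol α N × Q))))
  | q, [], q' => if q = q' then {[]} else ∅
  | q, x :: xs, q' =>
      Finset.univ.biUnion fun p => (annotations p xs q').image (.nonterminal (some (q, x, p)) :: ·)

section Annotations

variable [Fintype Q] {q q' : Q} {ys : List (Symbol γ (Option (Q × Symbol α N × Q)))}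

@[simp]
lemma mem_annotations_nil : ys ∈ annotations q ([] : List (Symbol α N)) q' ↔ ys = [] ∧ q = q' := by
  by_cases h : q = q' <;> simp [annotations, h]

@[simp]
lemma mem_annotations_cons {x : Symbol α N} {xs : List (Symbol α N)} :
    ys ∈ annotations q (x :: xs) q' ↔
      ∃ p ys', ys' ∈ annotations p xs q' ∧ .nonterminal (some (q, x, p)) :: ys' = ys := by
  simp [annotations]

lemma mem_annotations_append {xs₁ xs₂ : List (Symbol α N)} :
    ys ∈ annotations q (xs₁ ++ xs₂) q' ↔ ∃ p ys₁ ys₂,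
      ys₁ ∈ annotations q xs₁ p ∧ ys₂ ∈ annotations p xs₂ q' ∧ ys₁ ++ ys₂ = ys := by
  induction xs₁ generalizing q ys with
  | nil => simp
  | cons x xs ih =>
    simp only [List.cons_append, mem_annotations_cons, ih]
    constructor
    · rintro ⟨p, _, ⟨p', ys₁, ys₂, h₁, h₂, rfl⟩, rfl⟩
      exact ⟨p', _, ys₂, ⟨p, ys₁, h₁, rfl⟩, h₂, rfl⟩
    · rintro ⟨p', _, ys₂, ⟨p, ys₁, h₁, rfl⟩, h₂, rfl⟩
      exact ⟨p, _, ⟨p', ys₁, ys₂, h₁, h₂, rfl⟩, rfl⟩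

lemma mem_annotations_singleton {x : Symbol α N} :
    ys ∈ annotations q [x] q' ↔ ys = [.nonterminal (some (q, x, q'))] := by
  simp [eq_comm]

end Annotations

variable [Fintype Q]

def prodDFASat (g : ContextFreeGrammar α) (σ : γ → α) (M : DFA γ Q) :
    Option (Q × Symbol α g.NT × Q) → List γ → Prop
  | none, v => v.map σ ∈ g.language ∧ v ∈ M.accepts
  | some (q, x, q'), v => g.Derives [x] ((v.map σ).map .terminal) ∧ M.evalFrom q v = q'

variable {g : ContextFreeGrammar α} {σ : γ → α} {M : DFA γ Q}

lemma derives_of_mem_annotations_of_listSat {q q' : Q} {xs : List (Symbol α g.NT)}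
    {ys : List (Symbol γ (Option (Q × Symbol α g.NT × Q)))} (hys : ys ∈ annotations q xs q')
    {v : List γ} (hv : Symbol.ListSat (prodDFASat g σ M) ys v) :
    g.Derives xs ((v.map σ).map .terminal) ∧ M.evalFrom q v = q' := by
  induction xs generalizing q ys v with
  | nil =>
    obtain ⟨rfl, rfl⟩ := mem_annotations_nil.mp hys
    obtain rfl : v = [] := hv
    exact ⟨.refl _, rfl⟩
  | cons x xs ih =>
    obtain ⟨p, ys', hys', rfl⟩ := mem_annotations_cons.mp hys
    obtain ⟨v₁, v₂, rfl, ⟨hd₁, he₁⟩, hv₂⟩ := hv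
    obtain ⟨hd₂, he₂⟩ := ih hys' hv₂
    refine ⟨by simpa using hd₁.append hd₂, ?_⟩
    rw [DFA.evalFrom_of_append, he₁, he₂]

variable [Fintype γ]

open Classical in
/-- The triple construction: the nonterminal `some (q, x, q')` generates the words `v` such that
`x` derives `v.map σ` and `M` moves from `q` to `q'` on `v` (see `prodDFASat`); its rules
annotate the rules of `g` with all chains of states. -/
noncomputable abbrev prodDFA (g : ContextFreeGrammar α) (σ : γ → α) (M : DFA γ Q) :
    ContextFreeGrammar γ where
  NT := Option (Q × Symbol α g.NT × Q)
  initial := none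
  rules :=
    ((Finset.univ.filter (· ∈ M.accept)).image fun q =>
        ⟨none, [.nonterminal (some (M.start, .nonterminal g.initial, q))]⟩) ∪
    ((g.rules ×ˢ (Finset.univ : Finset (Q × Q))).biUnion fun ⟨r, q, q'⟩ =>
        (annotations q r.output q').image fun ys => ⟨some (q, .nonterminal r.input, q'), ys⟩) ∪
    ((Finset.univ : Finset (Q × γ)).image fun ⟨q, t⟩ =>
        ⟨some (q, .terminal (σ t), M.step q t), [.terminal t]⟩)

variable (g σ M)

lemma mem_prodDFA_rules {r' : ContextFreeRule γ (g.prodDFA σ M).NT} :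
    r' ∈ (g.prodDFA σ M).rules ↔
      (∃ q ∈ M.accept, r' = ⟨none, [.nonterminal (some (M.start, .nonterminal g.initial, q))]⟩) ∨
      (∃ r ∈ g.rules, ∃ q q', ∃ ys ∈ annotations q r.output q',
        r' = ⟨some (q, .nonterminal r.input, q'), ys⟩) ∨
      (∃ q t, r' = ⟨some (q, .terminal (σ t), M.step q t), [.terminal t]⟩) := by
  simp [prodDFA, eq_comm]

variable {g σ M}

lemma prodDFASat_of_mem_language {v : List γ} (hv : v ∈ (g.prodDFA σ M).language) :
    prodDFASat g σ M none v := by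
  refine of_mem_language (fun r' hr' v hv => ?_) hv
  rcases (mem_prodDFA_rules g σ M).mp hr' with
    ⟨q, hq, rfl⟩ | ⟨r, hr, q, q', ys, hys, rfl⟩ | ⟨q, t, rfl⟩
  · obtain ⟨hd, rfl⟩ := Symbol.listSat_singleton.mp hv
    exact ⟨hd, hq⟩
  · obtain ⟨hd, he⟩ := derives_of_mem_annotations_of_listSat hys hv
    exact ⟨.head ⟨r, hr, .input_output⟩ hd, he⟩
  · obtain rfl : v = [t] := Symbol.listSat_map_terminal.mp hv
    exact ⟨.refl _, rfl⟩

lemma exists_annotation_derives_terminals (v : List γ) (q : Q) :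
    ∃ ys ∈ annotations q ((v.map σ).map .terminal) (M.evalFrom q v),
      (g.prodDFA σ M).Derives ys (v.map .terminal) := by
  induction v generalizing q with
  | nil => exact ⟨[], by simp, .refl _⟩
  | cons t v ih =>
    obtain ⟨ys, hys, hd⟩ := ih (M.step q t)
    have hrule : (g.prodDFA σ M).Produces [.nonterminal (some (q, .terminal (σ t), M.step q t))]
        [.terminal t] :=
      ⟨_, (mem_prodDFA_rules g σ M).mpr (.inr (.inr ⟨q, t, rfl⟩)), .input_output⟩
    exact ⟨_, mem_annotations_cons.mpr ⟨_, ys, hys, rfl⟩,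
      by simpa using (Derives.append (u₁ := [_]) (.single hrule) hd)⟩

lemma exists_annotation_derives {us : List (Symbol α g.NT)} {v : List γ}
    (h : g.Derives us ((v.map σ).map .terminal)) (q : Q) :
    ∃ ys ∈ annotations q us (M.evalFrom q v), (g.prodDFA σ M).Derives ys (v.map .terminal) := by
  induction h using Relation.ReflTransGen.head_induction_on generalizing q with
  | refl => exact exists_annotation_derives_terminals v q
  | head hp _ ih =>
    obtain ⟨r, hr, hrw⟩ := hp
    obtain ⟨p, s, rfl, rfl⟩ := hrw.exists_parts
    obtain ⟨ys, hys, hd⟩ := ih q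
    obtain ⟨q₂, _, ys₃, hys₁₂, hys₃, rfl⟩ := mem_annotations_append.mp hys
    obtain ⟨q₁, ys₁, ys₂, hys₁, hys₂, rfl⟩ := mem_annotations_append.mp hys₁₂
    have hrule : (g.prodDFA σ M).Produces
        (ys₁ ++ [.nonterminal (some (q₁, .nonterminal r.input, q₂))] ++ ys₃) (ys₁ ++ ys₂ ++ ys₃) :=
      ⟨_, (mem_prodDFA_rules g σ M).mpr (.inr (.inl ⟨r, hr, q₁, q₂, ys₂, hys₂, rfl⟩)),
        ContextFreeRule.rewrites_of_exists_parts _ _ _⟩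
    refine ⟨_, ?_, hrule.trans_derives hd⟩
    exact mem_annotations_append.mpr ⟨q₂, _, ys₃,
      mem_annotations_append.mpr ⟨q₁, ys₁, _, hys₁, mem_annotations_singleton.mpr rfl, rfl⟩,
      hys₃, rfl⟩

theorem language_prodDFA :
    (g.prodDFA σ M).language = {v | v.map σ ∈ g.language ∧ v ∈ M.accepts} := by
  ext v
  refine ⟨prodDFASat_of_mem_language, fun ⟨hv, hacc⟩ => ?_⟩
  obtain ⟨ys, hys, hd⟩ := exists_annotation_derives (M := M) (q := M.start) hv
  rw [mem_annotations_singleton] at hys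
  subst hys
  exact Produces.trans_derives
    ⟨_, (mem_prodDFA_rules g σ M).mpr (.inl ⟨_, hacc, rfl⟩), .input_output⟩ hd

end ContextFreeGrammar

theorem Language.IsContextFree.preimage_map_inf_of_isRegular {α γ : Type} [Fintype γ]
    {L : Language α} (hL : L.IsContextFree) (σ : γ → α) {R : Language γ} (hR : R.IsRegular) :
    Language.IsContextFree {v | v.map σ ∈ L ∧ v ∈ R} := by
  obtain ⟨g, rfl⟩ := hL
  obtain ⟨Q, _, M, rfl⟩ := hR
  exact ⟨g.prodDFA σ M, g.language_prodDFA⟩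

section BlockLanguage

variable {β γ : Type} (blocks : β → List γ)

lemma List.exists_of_cons_eq_flatMap {t : γ} {x : List γ} {w : List β}
    (h : t :: x = w.flatMap blocks) :
    ∃ b r, ∃ w' : List β, blocks b = t :: r ∧ x = r ++ w'.flatMap blocks := by
  induction w with
  | nil => simp at h
  | cons b w ih =>
    rw [List.flatMap_cons] at h
    cases hb : blocks b with
    | nil => exact ih (by simpa [hb] using h)
    | cons s r =>
      rw [hb, List.cons_append, List.cons.injEq] at h
      exact ⟨b, r, w, by rw [hb, h.1], h.2⟩

abbrev BlockSuffix : Type := (insert [] {r | ∃ b, r <:+ blocks b} : Set (List γ))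

/-- A state is the part of the current block that remains to be read. -/
def blockNFA : NFA γ (BlockSuffix blocks) where
  step r t := {r' | r.1 = t :: r'.1 ∨ r.1 = [] ∧ ∃ b, blocks b = t :: r'.1}
  start := {r | r.1 = []}
  accept := {r | r.1 = []}

lemma exists_step_blockNFA_iff (r : BlockSuffix blocks) (t : γ) (x : List γ) :
    (∃ r' ∈ (blockNFA blocks).step r t, ∃ w : List β, x = r'.1 ++ w.flatMap blocks) ↔
      ∃ w : List β, t :: x = r.1 ++ w.flatMap blocks := by
  constructor
  · rintro ⟨r', hr' | ⟨hr, b, hb⟩, w, rfl⟩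
    · exact ⟨w, by simp [hr']⟩
    · exact ⟨b :: w, by simp [hr, hb]⟩
  · rintro ⟨w, hw⟩
    obtain ⟨r, hr⟩ := r
    cases r with
    | nil =>
      obtain ⟨b, r, w', hb, rfl⟩ := List.exists_of_cons_eq_flatMap blocks (by simpa using hw)
      exact ⟨⟨r, .inr ⟨b, hb ▸ List.suffix_cons t r⟩⟩, .inr ⟨rfl, b, hb⟩, w', rfl⟩
    | cons s r =>
      obtain ⟨rfl, rfl⟩ : t = s ∧ x = r ++ w.flatMap blocks := by simpa using hw
      have hsuf : ∃ b, r <:+ blocks b := by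
        rcases hr with h | ⟨b, hb⟩
        · simp at h
        · exact ⟨b, (List.suffix_cons t r).trans hb⟩
      exact ⟨⟨r, .inr hsuf⟩, .inl rfl, w, rfl⟩

lemma mem_blockNFA_acceptsFrom {S : Set (BlockSuffix blocks)} {x : List γ} :
    x ∈ (blockNFA blocks).acceptsFrom S ↔ ∃ r ∈ S, ∃ w : List β, x = r.1 ++ w.flatMap blocks := by
  induction x generalizing S with
  | nil =>
    simp only [NFA.nil_mem_acceptsFrom, List.nil_eq_append_iff]
    exact ⟨fun ⟨r, hr, h⟩ => ⟨r, hr, [], h, rfl⟩, fun ⟨r, hr, _, h, _⟩ => ⟨r, hr, h⟩⟩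
  | cons t x ih =>
    simp only [NFA.cons_mem_acceptsFrom, ih, NFA.mem_stepSet, ← exists_step_blockNFA_iff]
    grind

theorem Language.isRegular_range_flatMap [Finite β] :
    Language.IsRegular (Set.range fun w : List β => w.flatMap blocks) := by
  classical
  have hfin : (insert [] {r | ∃ b, r <:+ blocks b} : Set (List γ)).Finite := by
    refine ((Set.finite_iUnion fun b => (blocks b).tails.toFinset.finite_toSet).insert []).subset ?_
    rintro r (rfl | ⟨b, hb⟩)
    · exact Set.mem_insert _ _
    · exact Set.mem_insert_of_mem _ (Set.mem_iUnion.mpr ⟨b, by simpa using hb⟩)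
  have : Fintype (BlockSuffix blocks) := hfin.fintype
  refine ⟨_, inferInstance, (blockNFA blocks).toDFA, ?_⟩
  ext x
  rw [NFA.toDFA_correct, NFA.accepts_eq_acceptsFrom_start, mem_blockNFA_acceptsFrom]
  constructor
  · rintro ⟨r, hr, w, rfl⟩
    exact ⟨w, by simp [show r.1 = [] from hr]⟩
  · rintro ⟨w, rfl⟩
    exact ⟨⟨[], Set.mem_insert _ _⟩, rfl, w, rfl⟩

end BlockLanguage

section InverseHomomorphism

variable {α β : Type}

def markFirst (b : β) : List α → List (Option β × α)
  | [] => []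
  | a :: l => (some b, a) :: l.map (Prod.mk none)

lemma map_snd_markFirst (b : β) (l : List α) : (markFirst b l).map Prod.snd = l := by
  cases l <;> simp [markFirst, Function.comp_def]

lemma flatMap_fst_markFirst (b : β) {l : List α} (hl : l ≠ []) :
    (markFirst b l).flatMap (fun x => x.1.toList) = [b] := by
  cases l <;> simp_all [markFirst, List.flatMap_map]

lemma map_snd_flatMap_markFirst (c : β → List α) (w : List β) :
    (w.flatMap fun b => markFirst b (c b)).map Prod.snd = w.flatMap c := by
  simp [List.map_flatMap, map_snd_markFirst]

lemma flatMap_fst_flatMap_markFirst {c : β → List α} (hc : ∀ b, c b ≠ []) (w : List β) :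
    ((w.flatMap fun b => markFirst b (c b)).flatMap fun x => x.1.toList) = w := by
  simp [List.flatMap_assoc, flatMap_fst_markFirst _ (hc _)]

theorem Language.IsContextFree.preimage_flatMap [Fintype α] [Fintype β] {L : Language α}
    (hL : L.IsContextFree) {c : β → List α} (hc : ∀ b, c b ≠ []) :
    Language.IsContextFree {w : List β | w.flatMap c ∈ L} := by
  have hdecode : {w : List β | w.flatMap c ∈ L} =
      (fun v : List (Option β × α) => v.flatMap fun x => x.1.toList) ''
        {v | v.map Prod.snd ∈ L ∧ v ∈ Set.range fun w : List β => w.flatMap fun b => markFirst b (c b)} := by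
    ext w
    constructor
    · intro hw
      exact ⟨_, ⟨by rwa [map_snd_flatMap_markFirst], w, rfl⟩, flatMap_fst_flatMap_markFirst hc w⟩
    · rintro ⟨_, ⟨hv, w, rfl⟩, rfl⟩
      dsimp only at hv ⊢
      rwa [flatMap_fst_flatMap_markFirst hc, Set.mem_ofPred_eq, ← map_snd_flatMap_markFirst]
  rw [hdecode]
  exact (hL.preimage_map_inf_of_isRegular Prod.snd (Language.isRegular_range_flatMap _)).image_flatMap _

end InverseHomomorphism

open Classical in
theorem Language.isContextFree_univ (β : Type) [Fintype β] :
    Language.IsContextFree (Set.univ : Set (List β)) := by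
  let g : ContextFreeGrammar β :=
    ⟨Unit, (), insert ⟨(), []⟩ (Finset.univ.image fun b => ⟨(), [.terminal b, .nonterminal ()]⟩)⟩
  refine ⟨g, Set.eq_univ_of_forall fun w => ?_⟩
  induction w with
  | nil => exact .single ⟨⟨(), []⟩, Finset.mem_insert_self _ _, .input_output⟩
  | cons b w ih =>
    have hrule : g.Produces [.nonterminal ()] [.terminal b, .nonterminal ()] :=
      ⟨_, Finset.mem_insert_of_mem (Finset.mem_image_of_mem _ (Finset.mem_univ b)), .input_output⟩
    exact hrule.trans_derives (ih.append_left [.terminal b])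

lemma exists_ne_nil_map_prod_eq {G α : Type} [Group G] {ψ : α → G}
    (hψ : ∀ g : G, ∃ w : List α, (w.map ψ).prod = g) (a : α) (g : G) :
    ∃ w : List α, w ≠ [] ∧ (w.map ψ).prod = g := by
  obtain ⟨w, hw⟩ := hψ ((ψ a)⁻¹ * g)
  exact ⟨a :: w, List.cons_ne_nil a w, by simp [hw]⟩

lemma prod_map_flatMap {G α β : Type} [Monoid G] (ψ : α → G) (c : β → List α) (w : List β) :
    ((w.flatMap c).map ψ).prod = (w.map fun b => ((c b).map ψ).prod).prod := by
  induction w with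
  | nil => rfl
  | cons b w ih => simp [ih]

theorem contextFree_word_problem_independent_of_presentation_general
    {G : Type} [Group G] (K : Subgroup G)
    {α : Type} [Fintype α] (ψ : α → G)
    (hψ : ∀ g : G, ∃ w : List α, (w.map ψ).prod = g)
    (hcf : Language.IsContextFree {w : List α | (w.map ψ).prod ∈ K})
    {β : Type} [Fintype β] (ψ' : β → G) :
    Language.IsContextFree {w : List β | (w.map ψ').prod ∈ K} := by
  rcases isEmpty_or_nonempty α with _ | ⟨⟨a⟩⟩
  · have htrivial (g : G) : g = 1 := by
      obtain ⟨_ | ⟨a, _⟩, rfl⟩ := hψ g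
      · rfl
      · exact isEmptyElim a
    rw [show {w : List β | (w.map ψ').prod ∈ K} = Set.univ from
      Set.eq_univ_of_forall fun w => by simp [htrivial _, K.one_mem]]
    exact Language.isContextFree_univ β
  · choose c hc_ne hc using fun b => exists_ne_nil_map_prod_eq hψ a (ψ' b)
    have hwords : {w : List β | (w.map ψ').prod ∈ K} =
        {w | w.flatMap c ∈ {u : List α | (u.map ψ).prod ∈ K}} := by
      ext w
      simp [prod_map_flatMap, hc]
    rw [hwords]
    exact hcf.preimage_flatMap hc_ne

/-- Context-freeness of the word problem of a pair `(G,K)` does not depend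
on the chosen semigroup presentation. -/
theorem contextFree_word_problem_independent_of_presentation
    {G : Type} [Group G] [Group.FG G] (K : Subgroup G)
    {α : Type} [Fintype α] (ψ : α → G)
    (hψ : ∀ g : G, ∃ w : List α, (w.map ψ).prod = g)
    (hcf : Language.IsContextFree {w : List α | (w.map ψ).prod ∈ K})
    {β : Type} [Fintype β] (ψ' : β → G)
    (hψ' : ∀ g : G, ∃ w : List β, (w.map ψ').prod = g) :
    Language.IsContextFree {w : List β | (w.map ψ').prod ∈ K} :=
  contextFree_word_problem_independent_of_presentation_general K ψ hψ hcf ψ'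
end

section
/- Let G be a finitely generated group with semigroup presentation ψ : Σ → G, and let K ≤ H be subgroups of G with K of finite index in H. If the language L(G,K,ψ) = { w ∈ Σ* : ψ(w) ∈ K } is context-free, then the language L(G,H,ψ) = { w ∈ Σ* : ψ(w) ∈ H } is also context-free. -/
/-!
Choose representatives `h_q` of the cosets of `K` in `H` and words `u_q` spelling `h_q⁻¹`. Then
`ψ w ∈ H` iff `h_q⁻¹ * ψ w ∈ K` for some `q`, so `L(G,H,ψ)` is the finite union of the left
quotients `{w | u_q ++ w ∈ L(G,K,ψ)}`. Context-free languages are closed under finite unions and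
under left quotients by a word, which reduces to quotients by a single letter.
-/

open Function

variable {T : Type*}

namespace List

lemma append_eq_append_cons {α : Type*} {x y p q : List α} {s : α} (h : x ++ y = p ++ s :: q) :
    (∃ x₂, x = p ++ s :: x₂ ∧ q = x₂ ++ y) ∨ (∃ y₁, y = y₁ ++ s :: q ∧ p = x ++ y₁) := by
  rcases List.append_eq_append_iff.mp h with ⟨c, rfl, hc⟩ | ⟨c, rfl, hc⟩
  · exact Or.inr ⟨c, hc, rfl⟩
  · rcases c with _ | ⟨t, c⟩
    · exact Or.inr ⟨[], by simpa using hc.symm, by simp⟩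
    · obtain ⟨rfl, rfl⟩ := List.cons_eq_cons.mp hc
      exact Or.inl ⟨c, rfl, rfl⟩

lemma append_append_eq_append_cons {α : Type*} {x z y p q : List α} {s : α}
    (h : x ++ z ++ y = p ++ s :: q) :
    (∃ x₂, x = p ++ s :: x₂ ∧ q = x₂ ++ z ++ y) ∨
      (∃ z₁ z₂, z = z₁ ++ s :: z₂ ∧ p = x ++ z₁ ∧ q = z₂ ++ y) ∨
      (∃ y₁, y = y₁ ++ s :: q ∧ p = x ++ z ++ y₁) := by
  rcases append_eq_append_cons h with ⟨c, hxz, rfl⟩ | ⟨y₁, rfl, rfl⟩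
  · rcases append_eq_append_cons hxz with ⟨x₂, rfl, rfl⟩ | ⟨z₁, rfl, rfl⟩
    · exact Or.inl ⟨x₂, rfl, by simp⟩
    · exact Or.inr (Or.inl ⟨z₁, c, rfl, rfl, rfl⟩)
  · exact Or.inr (Or.inr ⟨y₁, rfl, rfl⟩)

end List

namespace Symbol

variable {N N' : Type*}

def map (f : N → N') : Symbol T N → Symbol T N'
  | terminal t => terminal t
  | nonterminal B => nonterminal (f B)

@[simp] lemma map_terminal (f : N → N') (t : T) : (terminal t).map f = terminal (N := N') t := rfl

@[simp] lemma map_nonterminal (f : N → N') (B : N) :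
    (nonterminal B : Symbol T N).map f = nonterminal (f B) := rfl

@[simp] lemma map_comp_terminal (f : N → N') : map f ∘ terminal = terminal (T := T) := rfl

lemma map_injective {f : N → N'} (hf : Injective f) : Injective (map (T := T) f) := by
  rintro (a | A) (b | B) h <;> simp_all [hf.eq_iff]

end Symbol

namespace ContextFreeRule

variable {N N' : Type*} {r : ContextFreeRule T N} {u v : List (Symbol T N)}

lemma rewrites_singleton_iff {A : N} :
    r.Rewrites [.nonterminal A] v ↔ r.input = A ∧ v = r.output := by
  constructor
  · rintro (_ | ⟨_, h⟩)
    · simp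
    · cases h
  · rintro ⟨rfl, rfl⟩
    exact Rewrites.input_output

lemma Rewrites.append_split {x y : List (Symbol T N)} (h : r.Rewrites (x ++ y) v) :
    (∃ x', v = x' ++ y ∧ r.Rewrites x x') ∨ (∃ y', v = x ++ y' ∧ r.Rewrites y y') := by
  induction x generalizing v with
  | nil => exact Or.inr ⟨v, rfl, h⟩
  | cons s x ih =>
    rw [List.cons_append] at h
    cases h with
    | head => exact Or.inl ⟨r.output ++ x, by simp, .head x⟩
    | cons _ h =>
      rcases ih h with ⟨x', rfl, hx⟩ | ⟨y', rfl, hy⟩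
      · exact Or.inl ⟨s :: x', rfl, hx.cons s⟩
      · exact Or.inr ⟨y', rfl, hy⟩

def map (f : N → N') (r : ContextFreeRule T N) : ContextFreeRule T N' :=
  ⟨f r.input, r.output.map (Symbol.map f)⟩

lemma Rewrites.map (f : N → N') (h : r.Rewrites u v) :
    (r.map f).Rewrites (u.map (Symbol.map f)) (v.map (Symbol.map f)) := by
  obtain ⟨p, q, rfl, rfl⟩ := h.exists_parts
  simpa [ContextFreeRule.map] using (r.map f).rewrites_of_exists_parts (p.map _) (q.map _)

lemma Rewrites.input_mem_range {f : N → N'} {r' : ContextFreeRule T N'} {v' : List (Symbol T N')}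
    (h : r'.Rewrites (u.map (Symbol.map f)) v') : r'.input ∈ Set.range f := by
  obtain ⟨s, -, hs⟩ := List.mem_map.mp h.nonterminal_input_mem
  cases s with
  | terminal => simp at hs
  | nonterminal B => exact ⟨B, by simpa using hs⟩

lemma Rewrites.exists_of_map {f : N → N'} (hf : Injective f) {v' : List (Symbol T N')}
    (h : (r.map f).Rewrites (u.map (Symbol.map f)) v') :
    ∃ v, v' = v.map (Symbol.map f) ∧ r.Rewrites u v := by
  obtain ⟨p, q, hu, rfl⟩ := h.exists_parts
  obtain ⟨u₁₂, u₃, rfl, h₁₂, rfl⟩ := List.map_eq_append_iff.mp hu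
  obtain ⟨u₁, u₂, rfl, rfl, h₂⟩ := List.map_eq_append_iff.mp h₁₂
  obtain rfl : u₂ = [.nonterminal r.input] :=
    (List.map_injective_iff.mpr (Symbol.map_injective hf)) (by simpa [ContextFreeRule.map] using h₂)
  exact ⟨u₁ ++ r.output ++ u₃, by simp [ContextFreeRule.map], r.rewrites_of_exists_parts u₁ u₃⟩

end ContextFreeRule

namespace ContextFreeGrammar

variable {g : ContextFreeGrammar T}

lemma Derives.append_split {x y w : List (Symbol T g.NT)} (h : g.Derives (x ++ y) w) :
    ∃ w₁ w₂, w = w₁ ++ w₂ ∧ g.Derives x w₁ ∧ g.Derives y w₂ := by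
  induction h with
  | refl => exact ⟨x, y, rfl, .refl x, .refl y⟩
  | tail _ hp ih =>
    obtain ⟨w₁, w₂, rfl, h₁, h₂⟩ := ih
    obtain ⟨r, hr, hrw⟩ := hp
    rcases hrw.append_split with ⟨w₁', rfl, hw⟩ | ⟨w₂', rfl, hw⟩
    · exact ⟨w₁', w₂, rfl, h₁.trans_produces ⟨r, hr, hw⟩, h₂⟩
    · exact ⟨w₁, w₂', rfl, h₁, h₂.trans_produces ⟨r, hr, hw⟩⟩

lemma derives_append_nil_iff {x y : List (Symbol T g.NT)} :
    g.Derives (x ++ y) [] ↔ g.Derives x [] ∧ g.Derives y [] := by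
  constructor
  · intro h
    obtain ⟨w₁, w₂, hw, h₁, h₂⟩ := h.append_split
    obtain ⟨rfl, rfl⟩ := List.append_eq_nil_iff.mp hw.symm
    exact ⟨h₁, h₂⟩
  · rintro ⟨hx, hy⟩
    exact (hx.append_right y).trans hy

section map

variable {g' : ContextFreeGrammar T} {f : g.NT → g'.NT} {u v : List (Symbol T g.NT)}

lemma Produces.map (hmap : ∀ r ∈ g.rules, r.map f ∈ g'.rules) (h : g.Produces u v) :
    g'.Produces (u.map (Symbol.map f)) (v.map (Symbol.map f)) :=
  let ⟨r, hr, hrw⟩ := h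
  ⟨r.map f, hmap r hr, hrw.map f⟩

lemma Derives.map (hmap : ∀ r ∈ g.rules, r.map f ∈ g'.rules) (h : g.Derives u v) :
    g'.Derives (u.map (Symbol.map f)) (v.map (Symbol.map f)) := by
  induction h with
  | refl => rfl
  | tail _ hp ih => exact ih.trans_produces (hp.map hmap)

lemma Produces.exists_of_map (hf : Injective f)
    (hrange : ∀ r' ∈ g'.rules, r'.input ∈ Set.range f → ∃ r ∈ g.rules, r' = r.map f)
    {v' : List (Symbol T g'.NT)}
    (h : g'.Produces (u.map (Symbol.map f)) v') :
    ∃ v, v' = v.map (Symbol.map f) ∧ g.Produces u v := by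
  obtain ⟨r', hr', hrw⟩ := h
  obtain ⟨r, hr, rfl⟩ := hrange r' hr' hrw.input_mem_range
  obtain ⟨v, rfl, hv⟩ := hrw.exists_of_map hf
  exact ⟨v, rfl, r, hr, hv⟩

lemma Derives.exists_of_map (hf : Injective f)
    (hrange : ∀ r' ∈ g'.rules, r'.input ∈ Set.range f → ∃ r ∈ g.rules, r' = r.map f)
    {v' : List (Symbol T g'.NT)}
    (h : g'.Derives (u.map (Symbol.map f)) v') :
    ∃ v, v' = v.map (Symbol.map f) ∧ g.Derives u v := by
  induction h with
  | refl => exact ⟨u, rfl, .refl u⟩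
  | tail _ hp ih =>
    obtain ⟨v, rfl, huv⟩ := ih
    obtain ⟨v', rfl, hvv'⟩ := hp.exists_of_map hf hrange
    exact ⟨v', rfl, huv.trans_produces hvv'⟩

lemma derives_map_terminal_iff (hf : Injective f)
    (hmap : ∀ r ∈ g.rules, r.map f ∈ g'.rules)
    (hrange : ∀ r' ∈ g'.rules, r'.input ∈ Set.range f → ∃ r ∈ g.rules, r' = r.map f)
    {w : List T} :
    g'.Derives (u.map (Symbol.map f)) (w.map .terminal) ↔ g.Derives u (w.map .terminal) := by
  constructor
  · intro h
    obtain ⟨v, hv, huv⟩ := h.exists_of_map hf hrange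
    have hv' : v.map (Symbol.map f) = (w.map .terminal).map (Symbol.map f) := by
      rw [← hv, List.map_map, Symbol.map_comp_terminal]
    rwa [List.map_injective_iff.mpr (Symbol.map_injective hf) hv'] at huv
  · intro h
    simpa using h.map hmap

end map

section union

variable {ι : Type} [Fintype ι] (g : ι → ContextFreeGrammar T)

open Classical in
noncomputable abbrev union : ContextFreeGrammar T where
  NT := Option (Σ i, (g i).NT)
  initial := none
  rules := (Finset.univ.biUnion fun i => (g i).rules.image (ContextFreeRule.map (some ⟨i, ·⟩))) ∪
    Finset.univ.image fun i => ⟨none, [.nonterminal (some ⟨i, (g i).initial⟩)]⟩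

lemma mem_union_rules {r' : ContextFreeRule T (union g).NT} :
    r' ∈ (union g).rules ↔ (∃ i, ∃ r ∈ (g i).rules, r.map (some ⟨i, ·⟩) = r') ∨
      ∃ i, r' = ⟨none, [.nonterminal (some ⟨i, (g i).initial⟩)]⟩ := by
  simp [eq_comm]

lemma union_derives_iff (i : ι) {A : (g i).NT} {w : List T} :
    (union g).Derives [.nonterminal (some ⟨i, A⟩)] (w.map .terminal) ↔
      (g i).Derives [.nonterminal A] (w.map .terminal) := by
  refine derives_map_terminal_iff (u := [.nonterminal A]) (f := fun B => some ⟨i, B⟩)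
    (fun B C h => by simpa using h)
    (fun r hr => (mem_union_rules g).mpr (Or.inl ⟨i, r, hr, rfl⟩)) ?_
  rintro r' hr' ⟨B, hB⟩
  rcases (mem_union_rules g).mp hr' with ⟨j, r, hr, rfl⟩ | ⟨j, rfl⟩
  · obtain rfl : j = i := (Sigma.mk.inj_iff.mp (Option.some_injective _ hB.symm)).1
    exact ⟨r, hr, rfl⟩
  · simp at hB

lemma language_union : (union g).language = ⨆ i, (g i).language := by
  ext w
  simp only [mem_language_iff, Language.mem_iSup]
  constructor
  · intro h
    rcases h.eq_or_head with h | ⟨v, ⟨r', hr', hrw⟩, hv⟩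
    · cases w <;> simp at h
    obtain ⟨hin, rfl⟩ := ContextFreeRule.rewrites_singleton_iff.mp hrw
    rcases (mem_union_rules g).mp hr' with ⟨j, r, hr, rfl⟩ | ⟨i, rfl⟩
    · simp [ContextFreeRule.map, union] at hin
    · exact ⟨i, (union_derives_iff g i).mp hv⟩
  · rintro ⟨i, h⟩
    refine Produces.trans_derives ⟨_, (mem_union_rules g).mpr (Or.inr ⟨i, rfl⟩),
      ContextFreeRule.rewrites_singleton_iff.mpr ⟨rfl, rfl⟩⟩ ((union_derives_iff g i).mpr h)

end union

end ContextFreeGrammar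

theorem Language.IsContextFree.iSup {ι : Type} [Finite ι] {L : ι → Language T}
    (h : ∀ i, (L i).IsContextFree) : (⨆ i, L i).IsContextFree := by
  choose g hg using h
  have := Fintype.ofFinite ι
  exact ⟨ContextFreeGrammar.union g, by simp [ContextFreeGrammar.language_union, hg]⟩

namespace ContextFreeGrammar

section leftQuotient

variable {N : Type*}

open Classical in
noncomputable def leftResidual (a : T) : Symbol T N → Option (List (Symbol T (N ⊕ N)))
  | .terminal t => if t = a then some [] else none
  | .nonterminal B => some [.nonterminal (.inr B)]

@[simp] lemma leftResidual_terminal_self (a : T) :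
    leftResidual (N := N) a (.terminal a) = some [] := by
  simp [leftResidual]

@[simp] lemma leftResidual_nonterminal (a : T) (B : N) :
    leftResidual a (.nonterminal B) = some [.nonterminal (.inr B)] := rfl

lemma leftResidual_eq_some_iff {a : T} {s : Symbol T N} {m : List (Symbol T (N ⊕ N))} :
    leftResidual a s = some m ↔
      s = .terminal a ∧ m = [] ∨ ∃ B, s = .nonterminal B ∧ m = [.nonterminal (.inr B)] := by
  cases s <;> simp [leftResidual, eq_comm]

variable (g : ContextFreeGrammar T) (a : T)

open Classical in
/-- `inl` is a copy of `g`, and `inr A` generates the words `w` with `A ⇒* a w`. A rule for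
`inr A` picks the symbol `s` of a right-hand side of `A` that yields the leading `a`, erases
everything before it (which must be nullable), and replaces `s` by its `leftResidual`. -/
noncomputable abbrev leftQuotient : ContextFreeGrammar T where
  NT := g.NT ⊕ g.NT
  initial := .inr g.initial
  rules := g.rules.image (ContextFreeRule.map .inl) ∪
    g.rules.biUnion fun r => (r.output.inits.zip r.output.tails).toFinset.biUnion fun
      | (p, s :: q) =>
        if g.Derives p [] then
          ((leftResidual a s).map fun m => ⟨.inr r.input, m ++ q.map (Symbol.map .inl)⟩).toFinset
        else ∅
      | (_, []) => ∅

lemma mem_leftQuotient_rules {r' : ContextFreeRule T (g.leftQuotient a).NT} :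
    r' ∈ (g.leftQuotient a).rules ↔ (∃ r ∈ g.rules, r.map .inl = r') ∨
      ∃ r ∈ g.rules, ∃ p s q m, r.output = p ++ s :: q ∧ g.Derives p [] ∧
        leftResidual a s = some m ∧ r' = ⟨.inr r.input, m ++ q.map (Symbol.map .inl)⟩ := by
  simp only [leftQuotient, Finset.mem_union, Finset.mem_image, Finset.mem_biUnion,
    List.mem_toFinset, Prod.exists, List.mem_zip_inits_tails]
  refine or_congr Iff.rfl (exists_congr fun r => and_congr Iff.rfl ?_)
  constructor
  · rintro ⟨p, _ | ⟨s, q⟩, hout, hr'⟩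
    · simp at hr'
    · dsimp only at hr'
      split_ifs at hr' with hp
      · obtain ⟨m, hm, rfl⟩ := by simpa using hr'
        exact ⟨p, s, q, m, hout.symm, hp, hm, rfl⟩
      · simp at hr'
  · rintro ⟨p, s, q, m, hout, hp, hm, rfl⟩
    exact ⟨p, s :: q, hout.symm, by simp [hp, hm]⟩

lemma leftQuotient_inl_rules :
    ∀ r' ∈ (g.leftQuotient a).rules, r'.input ∈ Set.range Sum.inl →
      ∃ r ∈ g.rules, r' = r.map .inl := by
  rintro r' hr' ⟨B, hB⟩
  rcases (mem_leftQuotient_rules g a).mp hr' with ⟨r, hr, rfl⟩ | ⟨r, -, p, s, q, m, -, -, -, rfl⟩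
  · exact ⟨r, hr, rfl⟩
  · simp at hB

variable {g a}

lemma exists_derives_cons_of_leftQuotient_derives {A : g.NT}
    {v : List (Symbol T (g.leftQuotient a).NT)}
    (h : (g.leftQuotient a).Derives [.nonterminal (.inr A)] v) :
    ∃ s m x, v = m ++ x.map (Symbol.map .inl) ∧ leftResidual a s = some m ∧
      g.Derives [.nonterminal A] (s :: x) := by
  induction h with
  | refl => exact ⟨.nonterminal A, _, [], by simp, rfl, .refl _⟩
  | tail _ hp ih =>
    obtain ⟨s, m, x, rfl, hs, hder⟩ := ih
    obtain ⟨r', hr', hrw⟩ := hp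
    rcases hrw.append_split with ⟨m', rfl, hm⟩ | ⟨x', rfl, hx⟩
    · rcases leftResidual_eq_some_iff.mp hs with ⟨-, rfl⟩ | ⟨B, rfl, rfl⟩
      · cases hm
      obtain ⟨hin, rfl⟩ := ContextFreeRule.rewrites_singleton_iff.mp hm
      rcases (mem_leftQuotient_rules g a).mp hr' with ⟨r, -, rfl⟩ |
        ⟨r, hr, p, s', q, m, hout, hp, hs', rfl⟩
      · simp [ContextFreeRule.map] at hin
      obtain rfl : r.input = B := Sum.inr_injective hin
      refine ⟨s', m, q ++ x, by simp, hs', ?_⟩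
      have hB : g.Produces (.nonterminal r.input :: x) (p ++ s' :: (q ++ x)) :=
        ⟨r, hr, by simpa [hout] using ContextFreeRule.Rewrites.head (r := r) x⟩
      exact hder.trans (hB.trans_derives (hp.append_right _))
    · obtain ⟨x'', rfl, hx''⟩ := Produces.exists_of_map Sum.inl_injective
        (leftQuotient_inl_rules g a) ⟨r', hr', hx⟩
      exact ⟨s, m, x'', rfl, hs, hder.trans_produces (hx''.append_left [s])⟩

lemma exists_leftQuotient_derives_of_derives {o : List (Symbol T g.NT)} {w : List T}
    (h : g.Derives o ((a :: w).map .terminal)) :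
    ∃ p s q m, o = p ++ s :: q ∧ g.Derives p [] ∧ leftResidual a s = some m ∧
      (g.leftQuotient a).Derives (m ++ q.map (Symbol.map .inl)) (w.map .terminal) := by
  induction h using Relation.ReflTransGen.head_induction_on with
  | refl =>
    refine ⟨[], .terminal a, w.map .terminal, [], rfl, .refl _, by simp, ?_⟩
    rw [List.nil_append, List.map_map, Symbol.map_comp_terminal]
  | head hp _ ih =>
    obtain ⟨r, hr, hrw⟩ := hp
    obtain ⟨x, y, rfl, rfl⟩ := hrw.exists_parts
    obtain ⟨p', s, q', m, hsplit, hp', hs, hq'⟩ := ih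
    rcases List.append_append_eq_append_cons hsplit with ⟨x₂, rfl, rfl⟩ |
      ⟨z₁, z₂, hout, rfl, rfl⟩ | ⟨y₁, rfl, rfl⟩
    · refine ⟨p', s, x₂ ++ [.nonterminal r.input] ++ y, m, by simp, hp', hs, ?_⟩
      have hstep : g.Produces (x₂ ++ [.nonterminal r.input] ++ y) (x₂ ++ r.output ++ y) :=
        ⟨r, hr, r.rewrites_of_exists_parts x₂ y⟩
      exact ((hstep.map fun r hr => (mem_leftQuotient_rules g a).mpr
        (Or.inl ⟨r, hr, rfl⟩)).append_left m).trans_derives hq'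
    · obtain ⟨hx, hz₁⟩ := derives_append_nil_iff.mp hp'
      refine ⟨x, .nonterminal r.input, y, _, by simp, hx, rfl, ?_⟩
      have hrule : (⟨.inr r.input, m ++ z₂.map (Symbol.map .inl)⟩ :
          ContextFreeRule T (g.leftQuotient a).NT) ∈ (g.leftQuotient a).rules :=
        (mem_leftQuotient_rules g a).mpr (Or.inr ⟨r, hr, z₁, s, z₂, m, hout, hz₁, hs, rfl⟩)
      exact Produces.trans_derives ⟨_, hrule, .head _⟩ (by simpa using hq')
    · obtain ⟨hxr, hy₁⟩ := derives_append_nil_iff.mp hp'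
      obtain ⟨hx, hout⟩ := derives_append_nil_iff.mp hxr
      have hA : g.Derives [.nonterminal r.input] [] :=
        Produces.trans_derives ⟨r, hr, ContextFreeRule.Rewrites.input_output⟩ hout
      refine ⟨x ++ [.nonterminal r.input] ++ y₁, s, q', m, by simp, ?_, hs, hq'⟩
      exact derives_append_nil_iff.mpr ⟨derives_append_nil_iff.mpr ⟨hx, hA⟩, hy₁⟩

lemma language_leftQuotient : (g.leftQuotient a).language = g.language.leftQuotient [a] := by
  ext w
  simp only [mem_language_iff, Language.mem_leftQuotient, List.singleton_append]
  constructor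
  · intro h
    obtain ⟨s, m, x, hw, hs, hder⟩ := exists_derives_cons_of_leftQuotient_derives h
    rcases leftResidual_eq_some_iff.mp hs with ⟨rfl, rfl⟩ | ⟨B, -, rfl⟩
    · have hx : x.map (Symbol.map (Sum.inl (β := g.NT))) =
          (w.map .terminal).map (Symbol.map Sum.inl) := by
        rw [← List.nil_append (x.map _), ← hw, List.map_map, Symbol.map_comp_terminal]
      rw [List.map_injective_iff.mpr (Symbol.map_injective Sum.inl_injective) hx] at hder
      simpa using hder
    · cases w <;> simp at hw
  · intro h
    obtain ⟨p, s, q, m, ho, -, hs, hder⟩ := exists_leftQuotient_derives_of_derives h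
    obtain ⟨rfl, rfl, rfl⟩ : p = [] ∧ s = .nonterminal g.initial ∧ q = [] := by
      rcases p with _ | ⟨_, _ | _⟩ <;> simp_all
    simp only [leftResidual_nonterminal, Option.some_inj] at hs
    simpa [← hs] using hder

end leftQuotient

end ContextFreeGrammar

theorem Language.IsContextFree.leftQuotient {L : Language T} (h : L.IsContextFree) (x : List T) :
    (L.leftQuotient x).IsContextFree := by
  induction x generalizing L with
  | nil => exact h
  | cons a x ih =>
    obtain ⟨g, rfl⟩ := h
    rw [← List.singleton_append, Language.leftQuotient_append,
      ← ContextFreeGrammar.language_leftQuotient]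
    exact ih ⟨_, rfl⟩

lemma Subgroup.mem_iff_exists_out_inv_mul_mem {G : Type*} [Group G] {K H : Subgroup G}
    (hKH : K ≤ H) (x : G) :
    x ∈ H ↔ ∃ q : H ⧸ K.subgroupOf H, ((q.out : H) : G)⁻¹ * x ∈ K := by
  constructor
  · intro hx
    refine ⟨QuotientGroup.mk ⟨x, hx⟩, ?_⟩
    simpa [Subgroup.mem_subgroupOf] using
      QuotientGroup.eq.mp (QuotientGroup.out_eq' (QuotientGroup.mk (s := K.subgroupOf H) ⟨x, hx⟩))
  · rintro ⟨q, hq⟩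
    simpa using H.mul_mem (q.out : H).2 (hKH hq)

theorem contextFree_of_finiteIndex_enlargement_general
    {G : Type} [Group G] (K H : Subgroup G) (hKH : K ≤ H)
    (hfin : K.relIndex H ≠ 0)
    {α : Type} (ψ : α → G)
    (hψ : ∀ g : G, ∃ w : List α, (w.map ψ).prod = g)
    (hcf : Language.IsContextFree {w : List α | (w.map ψ).prod ∈ K}) :
    Language.IsContextFree {w : List α | (w.map ψ).prod ∈ H} := by
  have : Finite (H ⧸ K.subgroupOf H) := Nat.finite_of_card_ne_zero hfin
  choose u hu using fun q : H ⧸ K.subgroupOf H => hψ ((q.out : H) : G)⁻¹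
  have hH : ({w | (w.map ψ).prod ∈ H} : Language α) =
      ⨆ q, Language.leftQuotient {w | (w.map ψ).prod ∈ K} (u q) := by
    refine Language.ext fun w => ?_
    rw [Language.mem_iSup]
    change (w.map ψ).prod ∈ H ↔ ∃ q, ((u q ++ w).map ψ).prod ∈ K
    simp [hu, Subgroup.mem_iff_exists_out_inv_mul_mem hKH]
  rw [hH]
  exact .iSup fun q => hcf.leftQuotient (u q)

/-- If `K ≤ H ≤ G` with `[H:K] < ∞` and `L(G,K,ψ)` is context-free,
then `L(G,H,ψ)` is context-free. -/
theorem contextFree_of_finiteIndex_enlargement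
    {G : Type} [Group G] [Group.FG G] (K H : Subgroup G) (hKH : K ≤ H)
    (hfin : K.relIndex H ≠ 0)
    {α : Type} [Fintype α] (ψ : α → G)
    (hψ : ∀ g : G, ∃ w : List α, (w.map ψ).prod = g)
    (hcf : Language.IsContextFree {w : List α | (w.map ψ).prod ∈ K}) :
    Language.IsContextFree {w : List α | (w.map ψ).prod ∈ H} :=
  contextFree_of_finiteIndex_enlargement_general K H hKH hfin ψ hψ hcf
end

section
/- Let G be a virtually free finitely generated group (i.e., G contains a free subgroup of finite index) and let K be a finitely generated subgroup of G. Then for every semigroup presentation ψ : Σ → G, the language L(G,K,ψ) = { w ∈ Σ* : ψ(w) ∈ K } is context-free; that is, the pair (G,K) is context-free. -/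
/-!
Let `F` be a free subgroup of finite index, with basis `B`, and `T` a finite right transversal
of `F` containing `1`. Since every element of `G` is uniquely `f * t` with `f ∈ F` and `t ∈ T`, a
finite automaton can read `w` while keeping the `T`-part of `ψ(w)` in its state and writing the
`F`-part, as a word in `B^±`, on a register; it then multiplies in the same way by a guessed
product `k` of generators of `K`, and accepts when the state is `1` and the register reduces to
`1`, that is, when `ψ(w) * k = 1`. Languages of automata with a free-group register are
context-free by the triple construction: the nonterminal `(p, r)` generates the words read on
walks from `p` to `r` with trivial register, and the first letter written on the register is
matched with the letter that later cancels it.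
-/

theorem List.eq_nil_or_eq_singleton_of_length_le_one {α : Type*} {l : List α}
    (h : l.length ≤ 1) : l = [] ∨ ∃ x, l = [x] := by
  match l, h with
  | [], _ => exact .inl rfl
  | [x], _ => exact .inr ⟨x, rfl⟩

namespace FreeGroup

variable {B : Type*} {L : List (B × Bool)}

theorem mk_eq_one_iff_red_nil : mk L = 1 ↔ Red L [] := by
  rw [one_eq_mk, Red.exact]
  refine ⟨fun ⟨c, hLc, hc⟩ => ?_, fun h => ⟨[], h, Red.refl⟩⟩
  rwa [Red.nil_iff.mp hc] at hLc

theorem Red.exists_eq_append_cons_of_red_singleton {y : B × Bool} (h : Red L [y]) :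
    ∃ L₁ L₂, L = L₁ ++ y :: L₂ ∧ Red L₁ [] ∧ Red L₂ [] := by
  induction hn : L.length using Nat.strong_induction_on generalizing L with
  | _ n ih =>
  match L, h with
  | [], h => exact absurd (Red.nil_iff.mp h) (List.cons_ne_nil _ _)
  | z :: L', h =>
    by_cases hzy : z = y
    · subst hzy
      exact ⟨[], L', rfl, Red.refl, (Red.cons_cons_iff z).mp h⟩
    · have h' : Red L' ([(z.1, !z.2)] ++ [y]) := Red.inv_of_red_of_ne hzy h
      obtain ⟨L₃, L₄, rfl, h₃, h₄⟩ := Red.to_append_iff.mp h'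
      obtain ⟨L₅, L₆, rfl, h₅, h₆⟩ := ih L₄.length (by simp [← hn]) h₄ rfl
      exact ⟨z :: L₃ ++ L₅, L₆, by simp, Red.append_append (Red.cons_nil_iff_singleton.mpr h₃) h₅,
        h₆⟩

theorem mk_cons_eq_one_iff {x : B × Bool} : mk (x :: L) = 1 ↔
    ∃ L₁ L₂, L = L₁ ++ (x.1, !x.2) :: L₂ ∧ mk L₁ = 1 ∧ mk L₂ = 1 := by
  obtain ⟨a, b⟩ := x
  simp only [mk_eq_one_iff_red_nil, Red.cons_nil_iff_singleton]
  refine ⟨Red.exists_eq_append_cons_of_red_singleton, ?_⟩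
  rintro ⟨L₁, L₂, rfl, h₁, h₂⟩
  exact Red.append_append h₁ (Red.cons_cons h₂)

end FreeGroup

theorem ContextFreeGrammar.Derives.append_s8 {T : Type*} {g : ContextFreeGrammar T}
    {u v u' v' : List (Symbol T g.NT)} (h : g.Derives u v) (h' : g.Derives u' v') :
    g.Derives (u ++ u') (v ++ v') :=
  (h.append_right u').trans (h'.append_left v)

structure FreeGroupAutomaton.Transition (Q A B : Type) where
  src : Q
  read : List A
  emit : List (B × Bool)
  tgt : Q

/-- An automaton, given by its set of transitions, with a register in `FreeGroup B`: a transition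
reads a word over `A` and multiplies the register by a word in `B^±`. -/
abbrev FreeGroupAutomaton (Q A B : Type) := Set (FreeGroupAutomaton.Transition Q A B)

namespace FreeGroupAutomaton

variable {Q A B : Type} (M : FreeGroupAutomaton Q A B)

inductive Walk : Q → List A → List (B × Bool) → Q → Prop
  | nil (q : Q) : Walk q [] [] q
  | cons {t : Transition Q A B} {w : List A} {s : List (B × Bool)} {q : Q} :
      t ∈ M → Walk t.tgt w s q → Walk t.src (t.read ++ w) (t.emit ++ s) q

def language (q₀ qf : Q) : Language A :=
  {w | ∃ s, FreeGroup.mk s = 1 ∧ M.Walk q₀ w s qf}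

variable {M}

theorem Walk.append_s8 {q q' q'' : Q} {w w' : List A} {s s' : List (B × Bool)}
    (h : M.Walk q w s q') (h' : M.Walk q' w' s' q'') : M.Walk q (w ++ w') (s ++ s') q'' := by
  induction h with
  | nil => exact h'
  | cons ht _ ih => simpa only [List.append_assoc] using Walk.cons ht (ih h')

theorem Walk.exists_split (hM : ∀ t ∈ M, t.emit.length ≤ 1) {q r : Q} {w : List A}
    {L₁ L₂ : List (B × Bool)} {y : B × Bool} (h : M.Walk q w (L₁ ++ y :: L₂) r) :
    ∃ u ∈ M, u.emit = [y] ∧ ∃ w₁ w₂, w = w₁ ++ u.read ++ w₂ ∧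
      M.Walk q w₁ L₁ u.src ∧ M.Walk u.tgt w₂ L₂ r := by
  generalize hs : L₁ ++ y :: L₂ = s at h
  induction h generalizing L₁ with
  | nil => simp at hs
  | @cons t w s q ht hw ih =>
    rcases List.eq_nil_or_eq_singleton_of_length_le_one (hM t ht) with he | ⟨z, he⟩
    · rw [he, List.nil_append] at hs
      obtain ⟨u, hu, hue, w₁, w₂, rfl, h₁, h₂⟩ := ih hs
      refine ⟨u, hu, hue, t.read ++ w₁, w₂, by simp, ?_, h₂⟩
      simpa [he] using Walk.cons ht h₁
    · rw [he] at hs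
      rcases L₁ with _ | ⟨z', L₁'⟩
      · obtain ⟨rfl, rfl⟩ := List.cons.inj hs
        exact ⟨t, ht, he, [], w, by simp, Walk.nil _, hw⟩
      · simp only [List.cons_append, List.cons.injEq] at hs
        obtain ⟨rfl, hs⟩ := hs
        obtain ⟨u, hu, hue, w₁, w₂, rfl, h₁, h₂⟩ := ih hs
        refine ⟨u, hu, hue, t.read ++ w₁, w₂, by simp, ?_, h₂⟩
        simpa [he] using Walk.cons ht h₁

section Grammar

variable (M)

/-- The rules of the grammar of a one-letter-emitting automaton; the nonterminal `(p, r)`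
derives the words read along walks from `p` to `r` whose emitted word represents `1`. -/
inductive GrammarRule (S : Set Q) : ContextFreeRule A (Q × Q) → Prop
  | nil {q : Q} : q ∈ S → GrammarRule S ⟨(q, q), []⟩
  | silent {t : Transition Q A B} {r : Q} : t ∈ M → t.emit = [] → r ∈ S →
      GrammarRule S ⟨(t.src, r), t.read.map .terminal ++ [.nonterminal (t.tgt, r)]⟩
  | matched {t u : Transition Q A B} {x : B × Bool} {r : Q} : t ∈ M → u ∈ M →
      t.emit = [x] → u.emit = [(x.1, !x.2)] → r ∈ S →
      GrammarRule S ⟨(t.src, r), t.read.map .terminal ++ [.nonterminal (t.tgt, u.src)] ++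
        u.read.map .terminal ++ [.nonterminal (u.tgt, r)]⟩

theorem finite_setOf_grammarRule (hM : M.Finite) {S : Set Q} (hS : S.Finite) :
    {r | M.GrammarRule S r}.Finite := by
  refine (((hS.image fun q => ⟨(q, q), []⟩).union ((hM.prod hS).image fun p =>
    ⟨(p.1.src, p.2), p.1.read.map .terminal ++ [.nonterminal (p.1.tgt, p.2)]⟩)).union
    ((hM.prod (hM.prod hS)).image fun p => ⟨(p.1.src, p.2.2), p.1.read.map .terminal ++
      [.nonterminal (p.1.tgt, p.2.1.src)] ++ p.2.1.read.map .terminal ++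
      [.nonterminal (p.2.1.tgt, p.2.2)]⟩)).subset ?_
  rintro _ (⟨hq⟩ | ⟨ht, -, hr⟩ | ⟨ht, hu, -, -, hr⟩)
  · exact .inl (.inl ⟨_, hq, rfl⟩)
  · exact .inl (.inr ⟨(_, _), ⟨ht, hr⟩, rfl⟩)
  · exact .inr ⟨(_, _, _), ⟨ht, hu, hr⟩, rfl⟩

noncomputable abbrev grammar (hM : M.Finite) (q₀ qf : Q) : ContextFreeGrammar A where
  NT := Q × Q
  initial := (q₀, qf)
  rules := (M.finite_setOf_grammarRule hM ((hM.image Transition.src).insert qf)).toFinset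

def symbolLanguage : Symbol A (Q × Q) → Language A
  | .terminal a => {[a]}
  | .nonterminal p => M.language p.1 p.2

def formLanguage (u : List (Symbol A (Q × Q))) : Language A :=
  (u.map M.symbolLanguage).prod

variable {M}

theorem formLanguage_append (u v : List (Symbol A (Q × Q))) :
    M.formLanguage (u ++ v) = M.formLanguage u * M.formLanguage v := by
  simp [formLanguage]

theorem formLanguage_nonterminal (p : Q × Q) :
    M.formLanguage [.nonterminal p] = M.language p.1 p.2 := by
  simp [formLanguage, symbolLanguage]

theorem mem_formLanguage_map_terminal_append {w v : List A} {u : List (Symbol A (Q × Q))} :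
    v ∈ M.formLanguage (w.map .terminal ++ u) ↔ ∃ v' ∈ M.formLanguage u, v = w ++ v' := by
  induction w generalizing v with
  | nil => simp
  | cons a w ih =>
    have ha : M.formLanguage [.terminal a] = {[a]} := by simp [formLanguage, symbolLanguage]
    rw [List.map_cons, List.cons_append, ← List.singleton_append, formLanguage_append,
      Language.mem_mul, ha]
    constructor
    · rintro ⟨_, rfl, _, hv, rfl⟩
      obtain ⟨v', hv', rfl⟩ := ih.mp hv
      exact ⟨v', hv', rfl⟩
    · rintro ⟨v', hv', rfl⟩
      exact ⟨[a], rfl, w ++ v', ih.mpr ⟨v', hv', rfl⟩, rfl⟩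

theorem mem_formLanguage_nonterminal_append {v : List A} {p : Q × Q}
    {u : List (Symbol A (Q × Q))} : v ∈ M.formLanguage (.nonterminal p :: u) ↔
      ∃ v₁ ∈ M.language p.1 p.2, ∃ v₂ ∈ M.formLanguage u, v = v₁ ++ v₂ := by
  rw [← List.singleton_append, formLanguage_append, Language.mem_mul, formLanguage_nonterminal]
  simp only [eq_comm]

theorem mem_language_of_mem_formLanguage_output {S : Set Q} {r : ContextFreeRule A (Q × Q)}
    (hr : M.GrammarRule S r) {v : List A} (hv : v ∈ M.formLanguage r.output) :
    v ∈ M.language r.input.1 r.input.2 := by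
  cases hr with
  | nil =>
    simp only [formLanguage, List.map_nil, List.prod_nil] at hv
    exact ⟨[], rfl, hv ▸ Walk.nil _⟩
  | silent ht he =>
    simp only [mem_formLanguage_map_terminal_append, mem_formLanguage_nonterminal_append] at hv
    obtain ⟨_, ⟨w, ⟨s, hs, hw⟩, _, rfl, rfl⟩, rfl⟩ := hv
    exact ⟨s, hs, by simpa [he] using Walk.cons ht hw⟩
  | @matched t u x r ht hu het heu =>
    simp only [List.append_assoc, List.singleton_append, mem_formLanguage_map_terminal_append]
      at hv
    obtain ⟨_, hv₁, rfl⟩ := hv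
    obtain ⟨w₁, ⟨s₁, hs₁, hw₁⟩, _, hv₂, rfl⟩ := mem_formLanguage_nonterminal_append.mp hv₁
    obtain ⟨_, hv₃, rfl⟩ := mem_formLanguage_map_terminal_append.mp hv₂
    obtain ⟨w₂, ⟨s₂, hs₂, hw₂⟩, _, hv₄, rfl⟩ := mem_formLanguage_nonterminal_append.mp hv₃
    obtain rfl : _ = [] := hv₄
    refine ⟨x :: _, FreeGroup.mk_cons_eq_one_iff.mpr ⟨s₁, s₂, rfl, hs₁, hs₂⟩, ?_⟩
    simpa [het, heu] using Walk.cons ht (hw₁.append_s8 (Walk.cons hu hw₂))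

theorem self_mem_formLanguage_map_terminal (w : List A) :
    w ∈ M.formLanguage (w.map .terminal) := by
  simpa using (mem_formLanguage_map_terminal_append (u := [])).mpr ⟨[], rfl, rfl⟩

variable {hM : M.Finite} {q₀ qf : Q}

theorem produces_of_grammarRule {r : ContextFreeRule A (Q × Q)}
    (hr : M.GrammarRule (insert qf (Transition.src '' M)) r) :
    (M.grammar hM q₀ qf).Produces [.nonterminal r.input] r.output :=
  ⟨r, Set.Finite.mem_toFinset _ |>.mpr hr, ContextFreeRule.Rewrites.input_output⟩

theorem formLanguage_le_of_produces {u v : List (Symbol A (Q × Q))}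
    (h : (M.grammar hM q₀ qf).Produces u v) : M.formLanguage v ≤ M.formLanguage u := by
  obtain ⟨r, hr, hrw⟩ := h
  obtain ⟨p, p', rfl, rfl⟩ := hrw.exists_parts
  simp only [formLanguage_append]
  gcongr
  intro v hv
  rw [formLanguage_nonterminal]
  exact mem_language_of_mem_formLanguage_output (Set.Finite.mem_toFinset _ |>.mp hr) hv

theorem formLanguage_le_of_derives {u v : List (Symbol A (Q × Q))}
    (h : (M.grammar hM q₀ qf).Derives u v) : M.formLanguage v ≤ M.formLanguage u := by
  induction h with
  | refl => exact le_rfl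
  | tail _ huv ih => exact (formLanguage_le_of_produces huv).trans ih

theorem language_grammar_le : (M.grammar hM q₀ qf).language ≤ M.language q₀ qf := by
  intro w hw
  have := formLanguage_le_of_derives hw (self_mem_formLanguage_map_terminal w)
  rwa [formLanguage_nonterminal] at this

theorem derives_of_walk (hM₁ : ∀ t ∈ M, t.emit.length ≤ 1) {q r : Q} {w : List A}
    {s : List (B × Bool)} (h : M.Walk q w s r) (hs : FreeGroup.mk s = 1)
    (hr : r ∈ insert qf (Transition.src '' M)) :
    (M.grammar hM q₀ qf).Derives [.nonterminal (q, r)] (w.map .terminal) := by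
  induction hn : s.length using Nat.strong_induction_on generalizing q w s r with
  | _ n ih =>
  induction h with
  | nil q => exact (produces_of_grammarRule (.nil hr)).single
  | @cons t w s r ht hw ihw =>
    rcases List.eq_nil_or_eq_singleton_of_length_le_one (hM₁ t ht) with he | ⟨x, he⟩
    · rw [he, List.nil_append] at hs hn
      refine (produces_of_grammarRule (.silent ht he hr)).trans_derives ?_
      simpa using (ihw hs hr hn).append_left (t.read.map .terminal)
    · rw [he, List.singleton_append] at hs
      obtain ⟨L₁, L₂, rfl, h₁, h₂⟩ := FreeGroup.mk_cons_eq_one_iff.mp hs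
      obtain ⟨u, hu, hue, w₁, w₂, rfl, hw₁, hw₂⟩ := hw.exists_split hM₁
      have d₁ := ih L₁.length (by simp [← hn, he]) hw₁ h₁ (.inr ⟨u, hu, rfl⟩) rfl
      have d₂ := ih L₂.length (by simp [← hn, he]; omega) hw₂ h₂ hr rfl
      refine (produces_of_grammarRule (.matched ht hu he hue hr)).trans_derives ?_
      simpa using ((((ContextFreeGrammar.Derives.refl _).append_s8 d₁).append_s8 (.refl _)).append_s8 d₂)

theorem language_grammar (hM₁ : ∀ t ∈ M, t.emit.length ≤ 1) :
    (M.grammar hM q₀ qf).language = M.language q₀ qf := by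
  refine le_antisymm language_grammar_le fun w ⟨s, hs, hw⟩ => ?_
  exact derives_of_walk hM₁ hw hs (Set.mem_insert qf _)

end Grammar

section Expansion

variable (M)

inductive ExpandedTransition : Transition (Q × List (B × Bool)) A B → Prop
  | push {t : Transition Q A B} : t ∈ M →
      ExpandedTransition ⟨(t.src, []), t.read, [], (t.tgt, t.emit)⟩
  | pop {t : Transition Q A B} {x : B × Bool} {v : List (B × Bool)} : t ∈ M → x :: v <:+ t.emit →
      ExpandedTransition ⟨(t.tgt, x :: v), [], [x], (t.tgt, v)⟩

/-- The automaton emitting the word of each transition of `M` one letter at a time; the second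
component of a state is the part of the current word still to be emitted. -/
def expand : FreeGroupAutomaton (Q × List (B × Bool)) A B := {t | M.ExpandedTransition t}

variable {M}

theorem finite_expand (hM : M.Finite) : M.expand.Finite := by
  refine ((hM.image fun t => ⟨(t.src, []), t.read, [], (t.tgt, t.emit)⟩).union
    (hM.biUnion fun t _ => (t.emit.tails.finite_toSet.image fun v =>
      (⟨(t.tgt, v), [], v.take 1, (t.tgt, v.tail)⟩ : Transition _ A B)))).subset ?_
  rintro _ (⟨ht⟩ | ⟨ht, hv⟩)
  · exact .inl ⟨_, ht, rfl⟩
  · exact .inr (Set.mem_biUnion ht ⟨_, (List.mem_tails _ _).mpr hv, rfl⟩)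

theorem emit_length_le_one_of_mem_expand {t : Transition (Q × List (B × Bool)) A B}
    (ht : t ∈ M.expand) : t.emit.length ≤ 1 := by
  cases ht <;> simp

theorem walk_expand_of_suffix {t : Transition Q A B} (ht : t ∈ M) {v : List (B × Bool)}
    (hv : v <:+ t.emit) : M.expand.Walk (t.tgt, v) [] v (t.tgt, []) := by
  induction v with
  | nil => exact .nil _
  | cons x v ih =>
    simpa using Walk.cons (M := M.expand) (ExpandedTransition.pop ht hv)
      (ih ((List.suffix_cons x v).trans hv))

theorem Walk.expand {q q' : Q} {w : List A} {s : List (B × Bool)} (h : M.Walk q w s q') :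
    M.expand.Walk (q, []) w s (q', []) := by
  induction h with
  | nil q => exact .nil _
  | cons ht _ ih =>
    simpa using Walk.cons (M := M.expand) (ExpandedTransition.push ht)
      ((walk_expand_of_suffix ht (List.suffix_refl _)).append_s8 ih)

theorem Walk.of_expand {p p' : Q × List (B × Bool)} {w : List A} {s : List (B × Bool)}
    (h : M.expand.Walk p w s p') (hp' : p'.2 = []) :
    ∃ s', s = p.2 ++ s' ∧ M.Walk p.1 w s' p'.1 := by
  induction h with
  | nil p => exact ⟨[], by simp [hp'], .nil _⟩
  | cons ht _ ih =>
    obtain ⟨s', rfl, hw⟩ := ih hp'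
    cases ht with
    | @push t ht => exact ⟨t.emit ++ s', rfl, Walk.cons ht hw⟩
    | pop _ _ => exact ⟨s', by simp, by simpa using hw⟩

theorem language_expand (q₀ qf : Q) :
    M.expand.language (q₀, []) (qf, []) = M.language q₀ qf := by
  ext w
  constructor
  · rintro ⟨s, hs, hw⟩
    obtain ⟨_, rfl, hw'⟩ := hw.of_expand rfl
    exact ⟨_, hs, hw'⟩
  · rintro ⟨s, hs, hw⟩
    exact ⟨s, hs, hw.expand⟩

end Expansion

theorem isContextFree_language (hM : M.Finite) (q₀ qf : Q) :
    (M.language q₀ qf).IsContextFree := by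
  rw [← language_expand]
  exact ⟨_, language_grammar (hM := finite_expand hM) fun _ => emit_length_le_one_of_mem_expand⟩

end FreeGroupAutomaton

theorem Subgroup.IsComplement.eq_one_of_mem {G : Type*} [Group G] {H : Subgroup G} {T : Set G}
    (hT : IsComplement H T) (h1 : 1 ∈ T) {t : G} (ht : t ∈ T) (htH : t ∈ H) : t = 1 :=
  congrArg Subtype.val <| (isComplement_iff_existsUnique_mul_inv_mem.mp hT t).unique
    (y₁ := ⟨t, ht⟩) (y₂ := ⟨1, h1⟩) (by simp) (by simpa using htH)

section CosetAutomaton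

open FreeGroupAutomaton

variable {G B α : Type} [Group G] (φ : FreeGroup B →* G) {T : Set G}
  (hT : Subgroup.IsComplement φ.range T) (ψ : α → G) (S : Set G)

open scoped Classical in
noncomputable def cosetWord (g : G) : List (B × Bool) :=
  (MonoidHom.mem_range.mp (hT.mul_inv_toRightFun_mem g)).choose.toWord

theorem map_mk_cosetWord_mul (g : G) :
    φ (FreeGroup.mk (cosetWord φ hT g)) * hT.toRightFun g = g := by
  classical
  rw [cosetWord, FreeGroup.mk_toWord,
    (MonoidHom.mem_range.mp (hT.mul_inv_toRightFun_mem g)).choose_spec, inv_mul_cancel_right]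

noncomputable def cosetMove (ph : Bool) (r : List α) (t g : G) : Transition (G × Bool) α B :=
  ⟨(t, ph), r, cosetWord φ hT (t * g), (hT.toRightFun (t * g), ph)⟩

/-- The automaton keeps a representative `t ∈ T` of the current right coset of `φ.range` in its
state and the rest of the current group element in its register. Its states are `(t, false)`
while it reads the input, and `(t, true)` while it multiplies by elements of `S`. -/
inductive CosetTransition : Transition (G × Bool) α B → Prop
  | read {t : G} (a : α) : t ∈ T → CosetTransition (cosetMove φ hT false [a] t (ψ a))
  | switch {t : G} : t ∈ T → CosetTransition ⟨(t, false), [], [], (t, true)⟩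
  | multiply {t c : G} : t ∈ T → c ∈ S → CosetTransition (cosetMove φ hT true [] t c)

def cosetAutomaton : FreeGroupAutomaton (G × Bool) α B := {x | CosetTransition φ hT ψ S x}

variable {φ hT ψ S}

theorem finite_cosetAutomaton [Finite α] (hTf : T.Finite) (hS : S.Finite) :
    (cosetAutomaton φ hT ψ S).Finite := by
  refine (((hTf.prod Set.finite_univ).image fun p : G × α =>
      cosetMove φ hT false [p.2] p.1 (ψ p.2)).union
    ((hTf.image fun t => (⟨(t, false), [], [], (t, true)⟩ : Transition (G × Bool) α B)).union
    ((hTf.prod hS).image fun p => cosetMove φ hT true [] p.1 p.2))).subset ?_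
  rintro _ (@⟨t, a, ht⟩ | @⟨t, ht⟩ | @⟨t, c, ht, hc⟩)
  · exact .inl ⟨(t, a), ⟨ht, trivial⟩, rfl⟩
  · exact .inr (.inl ⟨t, ht, rfl⟩)
  · exact .inr (.inr ⟨(t, c), ⟨ht, hc⟩, rfl⟩)

theorem mul_eq_of_walk_cosetAutomaton {q q' : G × Bool} {w : List α} {s : List (B × Bool)}
    (h : (cosetAutomaton φ hT ψ S).Walk q w s q') :
    (q.2 = true → w = []) ∧
      ∃ m ∈ Submonoid.closure S, q.1 * (w.map ψ).prod * m = φ (FreeGroup.mk s) * q'.1 := by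
  induction h with
  | nil q => exact ⟨fun _ => rfl, 1, one_mem _, by simp [← FreeGroup.one_eq_mk]⟩
  | cons ht _ ih =>
    obtain ⟨hw, m, hm, heq⟩ := ih
    cases ht with
    | @read t a _ =>
      refine ⟨nofun, m, hm, ?_⟩
      simp only [cosetMove, List.cons_append, List.nil_append, List.map_cons, List.prod_cons]
        at heq ⊢
      rw [← FreeGroup.mul_mk, map_mul, mul_assoc (φ _), ← heq]
      simp only [← mul_assoc, map_mk_cosetWord_mul]
    | switch _ => exact ⟨nofun, m, hm, by simpa using heq⟩
    | @multiply t c _ hc =>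
      obtain rfl := hw rfl
      refine ⟨fun _ => rfl, c * m, mul_mem (Submonoid.subset_closure hc) hm, ?_⟩
      simp only [cosetMove, List.nil_append, List.map_nil, List.prod_nil, mul_one] at heq ⊢
      rw [← FreeGroup.mul_mk, map_mul, mul_assoc (φ _), ← heq]
      simp only [← mul_assoc, map_mk_cosetWord_mul]

theorem exists_walk_cosetAutomaton_read {t : G} (ht : t ∈ T) (w : List α) :
    ∃ s, ∃ t' ∈ T, (cosetAutomaton φ hT ψ S).Walk (t, false) w s (t', false) ∧
      t * (w.map ψ).prod = φ (FreeGroup.mk s) * t' := by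
  induction w generalizing t with
  | nil => exact ⟨[], t, ht, .nil _, by simp [← FreeGroup.one_eq_mk]⟩
  | cons a w ih =>
    obtain ⟨s, t', ht', hw, heq⟩ := ih (hT.toRightFun (t * ψ a)).2
    refine ⟨_, t', ht', Walk.cons (M := cosetAutomaton φ hT ψ S) (CosetTransition.read a ht) hw, ?_⟩
    rw [cosetMove, ← FreeGroup.mul_mk, map_mul, mul_assoc (φ _), ← heq]
    simp only [List.map_cons, List.prod_cons, ← mul_assoc, map_mk_cosetWord_mul]

theorem exists_walk_cosetAutomaton_multiply {t : G} (ht : t ∈ T) {c : List G}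
    (hc : ∀ x ∈ c, x ∈ S) :
    ∃ s, ∃ t' ∈ T, (cosetAutomaton φ hT ψ S).Walk (t, true) [] s (t', true) ∧
      t * c.prod = φ (FreeGroup.mk s) * t' := by
  induction c generalizing t with
  | nil => exact ⟨[], t, ht, .nil _, by simp [← FreeGroup.one_eq_mk]⟩
  | cons x c ih =>
    obtain ⟨s, t', ht', hw, heq⟩ :=
      ih (hT.toRightFun (t * x)).2 fun y hy => hc y (List.mem_cons_of_mem x hy)
    refine ⟨_, t', ht', Walk.cons (M := cosetAutomaton φ hT ψ S)
      (CosetTransition.multiply ht (hc x List.mem_cons_self)) hw, ?_⟩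
    rw [cosetMove, ← FreeGroup.mul_mk, map_mul, mul_assoc (φ _), ← heq]
    simp only [List.prod_cons, ← mul_assoc, map_mk_cosetWord_mul]

theorem language_cosetAutomaton (hφ : Function.Injective φ) (h1 : 1 ∈ T) :
    (cosetAutomaton φ hT ψ S).language (1, false) (1, true) =
      {w | (w.map ψ).prod⁻¹ ∈ Submonoid.closure S} := by
  ext w
  constructor
  · rintro ⟨s, hs, hw⟩
    obtain ⟨-, m, hm, heq⟩ := mul_eq_of_walk_cosetAutomaton hw
    rw [hs, map_one, one_mul, mul_one] at heq
    show (w.map ψ).prod⁻¹ ∈ Submonoid.closure S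
    rwa [inv_eq_of_mul_eq_one_right heq]
  · intro hw
    obtain ⟨c, hc, hcw⟩ := Submonoid.exists_list_of_mem_closure hw
    obtain ⟨s₁, t₁, ht₁, hw₁, heq₁⟩ := exists_walk_cosetAutomaton_read (S := S) h1 w
    obtain ⟨s₂, t₂, ht₂, hw₂, heq₂⟩ := exists_walk_cosetAutomaton_multiply (ψ := ψ) ht₁ hc
    have hs : φ (FreeGroup.mk (s₁ ++ s₂)) * t₂ = 1 := by
      rw [← FreeGroup.mul_mk, map_mul, mul_assoc, ← heq₂, ← mul_assoc, ← heq₁, one_mul, hcw,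
        mul_inv_cancel]
    obtain rfl : t₂ = 1 := hT.eq_one_of_mem h1 ht₂
      ⟨(FreeGroup.mk (s₁ ++ s₂))⁻¹, by rw [map_inv, inv_eq_of_mul_eq_one_right hs]⟩
    refine ⟨s₁ ++ s₂, (map_eq_one_iff φ hφ).mp (by simpa using hs), ?_⟩
    simpa using
      hw₁.append_s8 (Walk.cons (M := cosetAutomaton φ hT ψ S) (CosetTransition.switch ht₁) hw₂)

end CosetAutomaton

theorem contextFree_pair_of_virtuallyFree_general
    {G : Type} [Group G]
    (hvf : ∃ F : Subgroup G, IsFreeGroup F ∧ F.FiniteIndex)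
    (K : Subgroup G) (hK : K.FG)
    {α : Type} [Fintype α] (ψ : α → G) :
    Language.IsContextFree {w : List α | (w.map ψ).prod ∈ K} := by
  obtain ⟨F, hF, hFi⟩ := hvf
  let φ := F.subtype.comp (IsFreeGroup.mulEquiv F).toMonoidHom
  have hφ : Function.Injective φ := F.subtype_injective.comp (IsFreeGroup.mulEquiv F).injective
  have hrange : φ.range = F := by
    rw [MonoidHom.range_comp, MonoidHom.range_eq_top.mpr (IsFreeGroup.mulEquiv F).surjective,
      ← MonoidHom.range_eq_map, Subgroup.range_subtype]
  obtain ⟨T, hT, h1⟩ := φ.range.exists_isComplement_right 1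
  have hTf : T.Finite := by
    rw [← hrange] at hFi
    exact hT.finite_right
  obtain ⟨S, hS⟩ := (Subgroup.fg_iff_submonoid_fg K).mp hK
  have := (cosetAutomaton φ hT ψ S).isContextFree_language
    (finite_cosetAutomaton hTf S.finite_toSet) (1, false) (1, true)
  simpa only [language_cosetAutomaton hφ h1, hS, Subgroup.mem_toSubmonoid, inv_mem_iff] using this

/-- If `G` is virtually free (contains a free subgroup of finite index)
and `K` is a finitely generated subgroup of `G`, then the pair `(G,K)` is context-free:
for every semigroup presentation `ψ` of `G`, the language `L(G,K,ψ)` is context-free. -/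
theorem contextFree_pair_of_virtuallyFree
    {G : Type} [Group G] [Group.FG G]
    (hvf : ∃ F : Subgroup G, IsFreeGroup F ∧ F.FiniteIndex)
    (K : Subgroup G) (hK : K.FG)
    {α : Type} [Fintype α] (ψ : α → G)
    (hψ : ∀ g : G, ∃ w : List α, (w.map ψ).prod = g) :
    Language.IsContextFree {w : List α | (w.map ψ).prod ∈ K} :=
  contextFree_pair_of_virtuallyFree_general hvf K hK ψ
end

section
/- Let G be a finitely generated group with semigroup presentation ψ : Σ → G, and let K be a subgroup of finite index in G. Let M be a deterministic finite automaton over the alphabet Σ accepting the language L(G,K,ψ) = { w ∈ Σ* : ψ(w) ∈ K }, and assume every state of M is reachable from the start state (by reading some word). Then there is a surjective map κ from the states of M onto the set K\G of right cosets of K in G such that κ(start) = K and κ(M.step q a) = κ(q)·ψ(a) for every state q and letter a ∈ Σ (where the right coset Kg is sent to Kg·ψ(a)). In other words, M, viewed as a labelled graph, admits a surjective labelled-graph homomorphism onto the Schreier graph of (G,K) with respect to ψ. -/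
open QuotientGroup

theorem QuotientGroup.rightRel_mk_mul_eq {G : Type*} [Group G] {K : Subgroup G} {g h : G}
    (x : G) (hgh : (Quotient.mk'' g : Quotient (rightRel K)) = Quotient.mk'' h) :
    (Quotient.mk'' (g * x) : Quotient (rightRel K)) = Quotient.mk'' (h * x) := by
  have hmem : h * g⁻¹ ∈ K := rightRel_apply.mp (Quotient.exact' hgh)
  refine Quotient.sound' (rightRel_apply.mpr ?_)
  simpa [mul_assoc] using hmem

theorem DFA.eval_append_eq_of_eval_eq {α σ : Type*} (M : DFA α σ) {w w' : List α}
    (h : M.eval w = M.eval w') (u : List α) : M.eval (w ++ u) = M.eval (w' ++ u) := by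
  simp only [DFA.eval, DFA.evalFrom_of_append]
  exact congrArg (M.evalFrom · u) h

section WordProblem

variable {α σ G : Type*} [Group G] {K : Subgroup G} {ψ : α → G}

def wordRightCoset (K : Subgroup G) (ψ : α → G) (w : List α) : Quotient (rightRel K) :=
  Quotient.mk'' (w.map ψ).prod

/-- Complete `w'` by a word `u` representing `ψ(w')⁻¹`: then `w' u` is accepted, hence so is
`w u`, i.e. `ψ(w) ψ(w')⁻¹ ∈ K`. -/
theorem DFA.wordRightCoset_eq_of_eval_eq (hψ : ∀ g : G, ∃ w : List α, (w.map ψ).prod = g)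
    (M : DFA α σ) (hacc : M.accepts = {w : List α | (w.map ψ).prod ∈ K}) {w w' : List α}
    (h : M.eval w = M.eval w') : wordRightCoset K ψ w = wordRightCoset K ψ w' := by
  have mem_accepts (v : List α) : v ∈ M.accepts ↔ (v.map ψ).prod ∈ K := by rw [hacc]; rfl
  obtain ⟨u, hu⟩ := hψ ((w'.map ψ).prod)⁻¹
  have hw' : w' ++ u ∈ M.accepts := by
    simp [mem_accepts, hu]
  have hw : w ++ u ∈ M.accepts := by
    rwa [DFA.mem_accepts, M.eval_append_eq_of_eval_eq h, ← DFA.mem_accepts]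
  rw [mem_accepts, List.map_append, List.prod_append, hu] at hw
  exact (Quotient.sound' (rightRel_apply.mpr hw)).symm

theorem wordRightCoset_append_singleton (w : List α) (a : α) :
    wordRightCoset K ψ (w ++ [a]) =
      Quotient.mk'' ((w.map ψ).prod * ψ a) := by
  simp [wordRightCoset]

end WordProblem

theorem dfa_maps_onto_schreier_graph_general
    {G : Type} [Group G] (K : Subgroup G)
    {α : Type} (ψ : α → G)
    (hψ : ∀ g : G, ∃ w : List α, (w.map ψ).prod = g)
    {σ : Type} (M : DFA α σ)
    (hacc : M.accepts = {w : List α | (w.map ψ).prod ∈ K})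
    (hreach : ∀ q : σ, ∃ w : List α, M.eval w = q) :
    ∃ κ : σ → Quotient (QuotientGroup.rightRel K),
      Function.Surjective κ ∧
      κ M.start = Quotient.mk'' (1 : G) ∧
      ∀ (q : σ) (a : α) (g : G), κ q = Quotient.mk'' g →
        κ (M.step q a) = Quotient.mk'' (g * ψ a) := by
  set κ := wordRightCoset K ψ ∘ Function.surjInv hreach
  have hκ (w : List α) : κ (M.eval w) = wordRightCoset K ψ w :=
    M.wordRightCoset_eq_of_eval_eq hψ hacc (Function.surjInv_eq hreach _)
  refine ⟨κ, ?_, ?_, ?_⟩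
  · rintro ⟨g⟩
    obtain ⟨w, rfl⟩ := hψ g
    exact ⟨M.eval w, hκ w⟩
  · simpa [wordRightCoset] using hκ []
  · intro q a g hq
    obtain ⟨w, rfl⟩ := hreach q
    rw [← DFA.eval_append_singleton, hκ, wordRightCoset_append_singleton]
    exact rightRel_mk_mul_eq (ψ a) ((hκ w).symm.trans hq)

/-- Let `K` be a finite-index subgroup of a finitely generated group `G`
with semigroup presentation `ψ`, and let `M` be a DFA accepting `L(G,K,ψ)` in which every
state is reachable. Then there is a surjective map `κ` from the states of `M` onto the set
`K\G` of right cosets (the vertices of the Schreier graph) sending the start state to `K`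
and intertwining the transitions with right multiplication: if `κ q = Kg` then
`κ (M.step q a) = Kg·ψ(a)`. -/
theorem dfa_maps_onto_schreier_graph
    {G : Type} [Group G] [Group.FG G] (K : Subgroup G) [K.FiniteIndex]
    {α : Type} [Fintype α] (ψ : α → G)
    (hψ : ∀ g : G, ∃ w : List α, (w.map ψ).prod = g)
    {σ : Type} (M : DFA α σ)
    (hacc : M.accepts = {w : List α | (w.map ψ).prod ∈ K})
    (hreach : ∀ q : σ, ∃ w : List α, M.eval w = q) :
    ∃ κ : σ → Quotient (QuotientGroup.rightRel K),
      Function.Surjective κ ∧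
      κ M.start = Quotient.mk'' (1 : G) ∧
      ∀ (q : σ) (a : α) (g : G), κ q = Quotient.mk'' g →
        κ (M.step q a) = Quotient.mk'' (g * ψ a) :=
  dfa_maps_onto_schreier_graph_general K ψ hψ M hacc hreach
end

section
/- The word problem of the group ℤ² with respect to the standard symmetric semigroup presentation is not context-free. Precisely: let Σ = {a, a⁻¹, b, b⁻¹} be a four-letter alphabet, and let ψ : Σ → ℤ² send a ↦ (1,0), a⁻¹ ↦ (-1,0), b ↦ (0,1), b⁻¹ ↦ (0,-1). Then the language { w ∈ Σ* : ψ(w) = (0,0) } is not a context-free language. -/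
/-!
Proof idea: the pumping lemma for context-free languages. Take a parse tree of minimal size
for a long word; some root-to-leaf path repeats a nonterminal `A` within a subtree whose yield
is bounded by the pumping length, so the word splits as `u v x y z` with `A ⇒* v A y`, and
minimality forces `v y ≠ []`. Apply it to `w = aⁿ bⁿ a⁻ⁿ b⁻ⁿ`. Pumping down keeps the word in the
language, so `ψ(v y) = 0`; but `v x y` has length at most `n`, so it cannot meet both the
`a`-block and the `a⁻¹`-block, nor both the `b`-block and the `b⁻¹`-block. Then the letters of
`v y` cannot cancel, a contradiction.
-/

/-- The standard symmetric semigroup presentation of `ℤ²`: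
`a ↦ (1,0)`, `a⁻¹ ↦ (-1,0)`, `b ↦ (0,1)`, `b⁻¹ ↦ (0,-1)`. -/
def psiZ2 : Fin 4 → ℤ × ℤ := ![(1, 0), (-1, 0), (0, 1), (0, -1)]

namespace ContextFreeGrammar

variable {T : Type*} (g : ContextFreeGrammar T)

/-- A bound on the number of children of a node; it is at least `2` so that its powers grow. -/
def branching : ℕ := max 2 (g.rules.sup fun r => r.output.length)

open Classical in
noncomputable def inputs : Finset g.NT := g.rules.image ContextFreeRule.input

variable {g}

lemma two_le_branching : 2 ≤ g.branching := le_max_left _ _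

lemma length_output_le_branching {r : ContextFreeRule T g.NT} (hr : r ∈ g.rules) :
    r.output.length ≤ g.branching :=
  (Finset.le_sup (f := fun r => r.output.length) hr).trans (le_max_right _ _)

lemma input_mem_inputs {r : ContextFreeRule T g.NT} (hr : r ∈ g.rules) : r.input ∈ g.inputs := by
  classical
  exact Finset.mem_image_of_mem _ hr

lemma derives_map_flatten {ι : Type*} (l : List ι) (u : ι → Symbol T g.NT)
    (v : ι → List (Symbol T g.NT)) (h : ∀ i ∈ l, g.Derives [u i] (v i)) :
    g.Derives (l.map u) (l.map v).flatten := by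
  induction l with
  | nil => rfl
  | cons i l ih =>
    have hl := ih fun j hj => h j (List.mem_cons_of_mem i hj)
    exact ((h i List.mem_cons_self).append_right _).trans (hl.append_left (v i))

lemma derives_iterate {A : g.NT} {d₁ d₂ : List (Symbol T g.NT)}
    (h : g.Derives [.nonterminal A] (d₁ ++ [.nonterminal A] ++ d₂)) (i : ℕ) :
    g.Derives [.nonterminal A]
      ((List.replicate i d₁).flatten ++ [.nonterminal A] ++ (List.replicate i d₂).flatten) := by
  induction i with
  | zero => simpa using Derives.refl _
  | succ i ih =>
    have e₁ : (List.replicate (i + 1) d₁).flatten = (List.replicate i d₁).flatten ++ d₁ := by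
      simp [List.replicate_succ']
    have e₂ : (List.replicate (i + 1) d₂).flatten = d₂ ++ (List.replicate i d₂).flatten := by
      simp [List.replicate_succ]
    rw [e₁, e₂]
    refine ih.trans ?_
    simpa using
      (h.append_right (List.replicate i d₂).flatten).append_left (List.replicate i d₁).flatten

lemma derives_pump {u c₁ d₁ x d₂ c₂ : List (Symbol T g.NT)} {A : g.NT}
    (h₁ : g.Derives u (c₁ ++ [.nonterminal A] ++ c₂))
    (h₂ : g.Derives [.nonterminal A] (d₁ ++ [.nonterminal A] ++ d₂))
    (h₃ : g.Derives [.nonterminal A] x) (i : ℕ) :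
    g.Derives u
      (c₁ ++ (List.replicate i d₁).flatten ++ x ++ (List.replicate i d₂).flatten ++ c₂) := by
  set D₁ := (List.replicate i d₁).flatten
  set D₂ := (List.replicate i d₂).flatten
  have hloop : g.Derives [.nonterminal A] (D₁ ++ x ++ D₂) :=
    (derives_iterate h₂ i).trans (by simpa using (h₃.append_right D₂).append_left D₁)
  exact h₁.trans (by simpa using (hloop.append_right c₂).append_left c₁)

end ContextFreeGrammar

inductive ParseTree (T N : Type*) where
  | leaf (s : Symbol T N)
  | node (A : N) (children : List (ParseTree T N))

namespace ParseTree

section Basic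

variable {T N : Type*}

def root : ParseTree T N → Symbol T N
  | leaf s => s
  | node A _ => .nonterminal A

def yield : ParseTree T N → List (Symbol T N)
  | leaf s => [s]
  | node _ ts => (ts.map yield).flatten

def size : ParseTree T N → ℕ
  | leaf _ => 1
  | node _ ts => (ts.map size).sum + 1

@[simp] lemma root_leaf (s : Symbol T N) : (leaf s).root = s := rfl

@[simp] lemma root_node (A : N) (ts : List (ParseTree T N)) :
    (node A ts).root = .nonterminal A := rfl

@[simp] lemma yield_leaf (s : Symbol T N) : (leaf s).yield = [s] := by simp [yield]

@[simp] lemma yield_node (A : N) (ts : List (ParseTree T N)) :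
    (node A ts).yield = (ts.map yield).flatten := by simp [yield]

@[simp] lemma size_node (A : N) (ts : List (ParseTree T N)) :
    (node A ts).size = (ts.map size).sum + 1 := by simp [size]

lemma size_lt_of_mem {c : ParseTree T N} {A : N} {ts : List (ParseTree T N)} (hc : c ∈ ts) :
    c.size < (node A ts).size := by
  have := List.le_sum_of_mem (List.mem_map_of_mem (f := size) hc)
  simp only [size_node]
  omega

inductive IsSubtree : ParseTree T N → ParseTree T N → Prop
  | refl (t : ParseTree T N) : IsSubtree t t
  | child {s c : ParseTree T N} {A : N} {ts : List (ParseTree T N)} (hc : c ∈ ts)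
      (hs : IsSubtree s c) : IsSubtree s (node A ts)

namespace IsSubtree

variable {s t u : ParseTree T N}

lemma trans (hst : IsSubtree s t) (htu : IsSubtree t u) : IsSubtree s u := by
  induction htu with
  | refl => exact hst
  | child hc _ ih => exact child hc ih

lemma size_le (h : IsSubtree s t) : s.size ≤ t.size := by
  induction h with
  | refl => rfl
  | child hc _ ih => exact ih.trans (size_lt_of_mem hc).le

lemma yield_infix (h : IsSubtree s t) : s.yield <:+: t.yield := by
  induction h with
  | refl => exact List.infix_refl _
  | child hc _ ih =>
    rw [yield_node]
    exact ih.trans (List.infix_of_mem_flatten (List.mem_map_of_mem hc))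

end IsSubtree

def HasRepeat (t : ParseTree T N) : Prop :=
  ∃ A ts c ts', IsSubtree (node A ts) t ∧ c ∈ ts ∧ IsSubtree (node A ts') c

lemma HasRepeat.mono {s t : ParseTree T N} (hs : s.HasRepeat) (hst : IsSubtree s t) :
    t.HasRepeat := by
  obtain ⟨A, ts, c, ts', h, hc, h'⟩ := hs
  exact ⟨A, ts, c, ts', h.trans hst, hc, h'⟩

end Basic

open ContextFreeGrammar

variable {T : Type*} {g : ContextFreeGrammar T}

/-- Leaves may be nonterminals, so that parse trees also describe derivations of sentential
forms. -/
inductive Valid (g : ContextFreeGrammar T) : ParseTree T g.NT → Prop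
  | leaf (s : Symbol T g.NT) : Valid g (.leaf s)
  | node {r : ContextFreeRule T g.NT} {ts : List (ParseTree T g.NT)} (hr : r ∈ g.rules)
      (hroots : ts.map root = r.output) (hts : ∀ c ∈ ts, Valid g c) : Valid g (.node r.input ts)

lemma Valid.derives {t : ParseTree T g.NT} (ht : Valid g t) : g.Derives [t.root] t.yield := by
  induction ht with
  | leaf s => simp only [root_leaf, yield_leaf]; rfl
  | @node r ts hr hroots _ ih =>
    rw [root_node, yield_node]
    have hstep : g.Produces [.nonterminal r.input] (ts.map root) :=
      ⟨r, hr, hroots ▸ ContextFreeRule.Rewrites.input_output⟩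
    exact hstep.trans_derives (derives_map_flatten ts root yield ih)

lemma exists_valid_forest_of_derives {u v : List (Symbol T g.NT)} (h : g.Derives u v) :
    ∃ ts : List (ParseTree T g.NT), (∀ c ∈ ts, Valid g c) ∧ ts.map root = u ∧
      (ts.map yield).flatten = v := by
  induction h using Relation.ReflTransGen.head_induction_on with
  | refl =>
    refine ⟨v.map leaf, ?_, by simp [Function.comp_def],
      by simp [Function.comp_def, ← List.flatMap_def]⟩
    rintro _ hc
    obtain ⟨s, -, rfl⟩ := List.mem_map.mp hc
    exact .leaf s
  | head hp _ ih =>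
    obtain ⟨ts, hts, hroots, hyield⟩ := ih
    obtain ⟨r, hr, hrw⟩ := hp
    obtain ⟨p, q, rfl, rfl⟩ := hrw.exists_parts
    obtain ⟨L, Q, rfl, hL, hQ⟩ := List.map_eq_append_iff.mp hroots
    obtain ⟨P, M, rfl, hP, hM⟩ := List.map_eq_append_iff.mp hL
    refine ⟨P ++ [node r.input M] ++ Q, ?_, by simp [hP, hQ], by simpa using hyield⟩
    intro c hc
    simp only [List.mem_append, List.mem_singleton] at hc
    rcases hc with (hc | rfl) | hc
    · exact hts c (by simp [hc])
    · exact .node hr hM fun c hc => hts c (by simp [hc])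
    · exact hts c (by simp [hc])

lemma Valid.exists_of_derives {a : Symbol T g.NT} {v : List (Symbol T g.NT)}
    (h : g.Derives [a] v) : ∃ t, Valid g t ∧ t.root = a ∧ t.yield = v := by
  obtain ⟨ts, hts, hroots, hyield⟩ := exists_valid_forest_of_derives h
  obtain ⟨t, rfl⟩ : ∃ t, ts = [t] :=
    List.length_eq_one_iff.mp (by simpa using congrArg List.length hroots)
  exact ⟨t, hts t List.mem_cons_self, by simpa using hroots, by simpa using hyield⟩

lemma Valid.mem_inputs {A : g.NT} {ts : List (ParseTree T g.NT)}
    (ht : Valid g (ParseTree.node A ts)) : A ∈ g.inputs := by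
  cases ht with
  | node hr _ _ => exact input_mem_inputs hr

lemma IsSubtree.valid {s t : ParseTree T g.NT} (h : IsSubtree s t) (ht : Valid g t) :
    Valid g s := by
  induction h with
  | refl => exact ht
  | child hc _ ih =>
    cases ht with
    | node _ _ hts => exact ih (hts _ hc)

lemma IsSubtree.exists_replace {s t s' : ParseTree T g.NT} (h : IsSubtree s t) (ht : Valid g t)
    (hs' : Valid g s') (hroot : s'.root = s.root) :
    ∃ t' c₁ c₂, Valid g t' ∧ t'.root = t.root ∧ t.yield = c₁ ++ s.yield ++ c₂ ∧
      t'.yield = c₁ ++ s'.yield ++ c₂ ∧ t'.size + s.size = t.size + s'.size := by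
  induction h with
  | refl => exact ⟨s', [], [], hs', hroot, by simp, by simp, by omega⟩
  | @child c A ts hc _ ih =>
    cases ht with
    | @node r _ hr hroots hts =>
    obtain ⟨c', e₁, e₂, hc', hroot', hy, hy', hsize⟩ := ih (hts c hc)
    obtain ⟨P, Q, rfl⟩ := List.append_of_mem hc
    refine ⟨node r.input (P ++ c' :: Q), (P.map yield).flatten ++ e₁,
      e₂ ++ (Q.map yield).flatten, .node hr (by simpa [hroot'] using hroots) ?_, rfl,
      by simp [hy], by simp [hy'], by simp; omega⟩
    intro d hd
    simp only [List.mem_append, List.mem_cons] at hd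
    rcases hd with hd | rfl | hd
    · exact hts d (by simp [hd])
    · exact hc'
    · exact hts d (by simp [hd])

lemma IsSubtree.derives {s t : ParseTree T g.NT} (h : IsSubtree s t) (ht : Valid g t) :
    ∃ c₁ c₂, t.yield = c₁ ++ s.yield ++ c₂ ∧ g.Derives [t.root] (c₁ ++ [s.root] ++ c₂) := by
  obtain ⟨t', c₁, c₂, ht', hroot, hy, hy', -⟩ := h.exists_replace ht (.leaf s.root) rfl
  exact ⟨c₁, c₂, hy, by simpa [hroot, hy'] using ht'.derives⟩

lemma length_yield_node_le {r : ContextFreeRule T g.NT} {ts : List (ParseTree T g.NT)} {b : ℕ}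
    (hr : r ∈ g.rules) (hroots : ts.map root = r.output) (h : ∀ c ∈ ts, c.yield.length ≤ b) :
    (node r.input ts).yield.length ≤ g.branching * b := by
  have hsum := List.sum_le_card_nsmul (ts.map fun c => c.yield.length) b (by simpa using h)
  have hlen : ts.length ≤ g.branching := by
    simpa [← hroots] using length_output_le_branching hr
  simp only [yield_node, List.length_flatten, List.map_map, Function.comp_def, List.length_map,
    smul_eq_mul] at hsum ⊢
  exact hsum.trans (Nat.mul_le_mul_right b hlen)

lemma Valid.length_yield_le_of_not_hasRepeat {t : ParseTree T g.NT} (ht : Valid g t)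
    (S : Finset g.NT) (hS : ∀ A ts, IsSubtree (ParseTree.node A ts) t → A ∈ S)
    (hrep : ¬ t.HasRepeat) : t.yield.length ≤ g.branching ^ S.card := by
  induction ht generalizing S with
  | leaf s => simpa using Nat.one_le_pow _ _ (by have := g.two_le_branching; omega)
  | @node r ts hr hroots _ ih =>
    classical
    have hA : r.input ∈ S := hS _ _ (.refl _)
    have hchild : ∀ c ∈ ts, c.yield.length ≤ g.branching ^ (S.erase r.input).card := by
      intro c hc
      refine ih c hc _ (fun B ts' hB => Finset.mem_erase.mpr ⟨?_, hS _ _ (.child hc hB)⟩)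
        fun hrep' => hrep (hrep'.mono (.child hc (.refl c)))
      rintro rfl
      exact hrep ⟨_, ts, c, ts', .refl _, hc, hB⟩
    calc (ParseTree.node r.input ts).yield.length
        ≤ g.branching * g.branching ^ (S.erase r.input).card :=
          length_yield_node_le hr hroots hchild
      _ = g.branching ^ S.card := by
        rw [← pow_succ', Finset.card_erase_add_one hA]

lemma Valid.exists_isSubtree_length_yield_mem {t : ParseTree T g.NT} (ht : Valid g t) {m : ℕ}
    (hm : 0 < m) (h : m < t.yield.length) :
    ∃ s, IsSubtree s t ∧ m < s.yield.length ∧ s.yield.length ≤ g.branching * m := by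
  induction ht with
  | leaf s => simp at h; omega
  | @node r ts hr hroots _ ih =>
    by_cases hbig : ∃ c ∈ ts, m < c.yield.length
    · obtain ⟨c, hc, hcm⟩ := hbig
      obtain ⟨s, hs, hms, hsm⟩ := ih c hc hcm
      exact ⟨s, .child hc hs, hms, hsm⟩
    · push Not at hbig
      exact ⟨_, .refl _, h, length_yield_node_le hr hroots hbig⟩

lemma Valid.exists_hasRepeat {t : ParseTree T g.NT} (ht : Valid g t)
    (h : g.branching ^ g.inputs.card < t.yield.length) :
    ∃ s, IsSubtree s t ∧ s.HasRepeat ∧ s.yield.length ≤ g.branching ^ (g.inputs.card + 1) := by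
  have hM := g.two_le_branching
  obtain ⟨s, hst, hlt, hle⟩ :=
    ht.exists_isSubtree_length_yield_mem (Nat.pow_pos (by omega)) h
  refine ⟨s, hst, ?_, by rwa [pow_succ']⟩
  by_contra hrep
  have := (hst.valid ht).length_yield_le_of_not_hasRepeat g.inputs
    (fun A ts hA => ((hA.trans hst).valid ht).mem_inputs) hrep
  omega

lemma Valid.exists_pump {t : ParseTree T g.NT} (ht : Valid g t)
    (hlen : g.branching ^ g.inputs.card < t.yield.length) :
    ∃ (A : g.NT) (c₁ d₁ x d₂ c₂ : List (Symbol T g.NT)),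
      t.yield = c₁ ++ d₁ ++ x ++ d₂ ++ c₂ ∧
      (d₁ ++ x ++ d₂).length ≤ g.branching ^ (g.inputs.card + 1) ∧ d₁ ++ d₂ ≠ [] ∧
      g.Derives [t.root] (c₁ ++ [.nonterminal A] ++ c₂) ∧
      g.Derives [.nonterminal A] (d₁ ++ [.nonterminal A] ++ d₂) ∧
      g.Derives [.nonterminal A] x := by
  induction hn : t.size using Nat.strong_induction_on generalizing t with
  | _ n ih =>
  obtain ⟨s, hst, ⟨A, ts₁, c, ts₂, h₁, hc, h₂⟩, hs⟩ := ht.exists_hasRepeat hlen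
  have h₁t := h₁.trans hst
  have hv₁ := h₁t.valid ht
  have h₂₁ : IsSubtree (.node A ts₂) (.node A ts₁) := .child hc h₂
  have hv₂ := h₂₁.valid hv₁
  obtain ⟨c₁, c₂, hyt, hdt⟩ := h₁t.derives ht
  obtain ⟨d₁, d₂, hys, hds⟩ := h₂₁.derives hv₁
  by_cases hd : d₁ ++ d₂ = []
  · -- an empty loop can be cut out, leaving a smaller tree with the same root and yield
    obtain ⟨t', e₁, e₂, ht', hroot, hy, hy', hsize⟩ := h₁t.exists_replace ht hv₂ rfl
    obtain ⟨rfl, rfl⟩ := List.append_eq_nil_iff.mp hd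
    have hyield : t'.yield = t.yield := by simp_all
    have hlt := (size_lt_of_mem (A := A) hc).trans_le' h₂.size_le
    obtain ⟨B, c₁, d₁, x, d₂, c₂, h⟩ := ih t'.size (by omega) ht' (hyield ▸ hlen) rfl
    exact ⟨B, c₁, d₁, x, d₂, c₂, by simpa [hroot, hyield] using h⟩
  · refine ⟨A, c₁, d₁, (ParseTree.node A ts₂).yield, d₂, c₂, by simp [hyt, hys], ?_, hd, hdt,
      hds, hv₂.derives⟩
    have := h₁.yield_infix.length_le
    simp only [hys, List.length_append] at this ⊢
    omega

end ParseTree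

theorem ContextFreeGrammar.pumping {T : Type*} (g : ContextFreeGrammar T) :
    ∃ p, ∀ w ∈ g.language, p ≤ w.length → ∃ u v x y z : List T,
      w = u ++ v ++ x ++ y ++ z ∧ (v ++ x ++ y).length ≤ p ∧ v ++ y ≠ [] ∧
      ∀ i, u ++ (List.replicate i v).flatten ++ x ++ (List.replicate i y).flatten ++ z ∈
        g.language := by
  refine ⟨g.branching ^ (g.inputs.card + 1), fun w hw hlen => ?_⟩
  obtain ⟨t, ht, hroot, hyield⟩ := ParseTree.Valid.exists_of_derives hw
  have hlt : g.branching ^ g.inputs.card < t.yield.length := by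
    simpa [hyield] using (Nat.pow_lt_pow_succ g.two_le_branching).trans_le hlen
  obtain ⟨A, c₁, d₁, x, d₂, c₂, hsplit, hpumplen, hne, h₁, h₂, h₃⟩ := ht.exists_pump hlt
  rw [hyield] at hsplit
  obtain ⟨w₁, z, rfl, hw₁, rfl⟩ := List.map_eq_append_iff.mp hsplit
  obtain ⟨w₂, y, rfl, hw₂, rfl⟩ := List.map_eq_append_iff.mp hw₁
  obtain ⟨w₃, x, rfl, hw₃, rfl⟩ := List.map_eq_append_iff.mp hw₂
  obtain ⟨u, v, rfl, rfl, rfl⟩ := List.map_eq_append_iff.mp hw₃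
  refine ⟨u, v, x, y, z, by simp, by simpa using hpumplen, by simpa using hne, fun i => ?_⟩
  simpa [List.map_flatten, List.map_replicate, hroot] using derives_pump h₁ h₂ h₃ i

lemma List.length_lt_of_mem_of_append_eq {α : Type*} {s f t p r : List α} {a : α}
    (h : s ++ f ++ t = p ++ r) (ha : a ∈ f) (har : a ∉ r) : s.length < p.length := by
  by_contra! hle
  rw [List.append_assoc] at h
  rcases List.append_eq_append_iff.mp h with ⟨e, rfl, he⟩ | ⟨e, rfl, he⟩
  · obtain rfl : e = [] := by simpa using hle
    rw [List.nil_append] at he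
    exact har (he ▸ List.mem_append_left t ha)
  · exact har (by simp [he, ha])

lemma List.IsInfix.length_lt_of_mem_of_mem {α : Type*} {f p m q : List α} {a b : α}
    (h : f <:+: p ++ m ++ q) (ha : a ∈ f) (hb : b ∈ f) (ha' : a ∉ m ++ q) (hb' : b ∉ p ++ m) :
    m.length < f.length := by
  obtain ⟨s, t, h⟩ := h
  have hs := List.length_lt_of_mem_of_append_eq (by rw [h, List.append_assoc]) ha ha'
  have ht := List.length_lt_of_mem_of_append_eq (f := f.reverse) (a := b)
    (by simpa using congrArg List.reverse h) (by simpa using hb) (by simpa [and_comm] using hb')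
  have hlen := congrArg List.length h
  simp only [List.length_append, List.length_reverse] at hlen hs ht
  omega

lemma sum_map_psiZ2 (l : List (Fin 4)) :
    (l.map psiZ2).sum = ((l.count 0 : ℤ) - l.count 1, (l.count 2 : ℤ) - l.count 3) := by
  induction l with
  | nil => rfl
  | cons a l ih =>
    rw [List.map_cons, List.sum_cons, ih]
    fin_cases a <;> simp [psiZ2, Prod.ext_iff] <;> ring

lemma sum_map_psiZ2_ne_zero {l : List (Fin 4)} (hl : l ≠ []) (h01 : ¬(0 ∈ l ∧ 1 ∈ l))
    (h23 : ¬(2 ∈ l ∧ 3 ∈ l)) : (l.map psiZ2).sum ≠ 0 := by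
  intro h
  simp only [sum_map_psiZ2, Prod.mk_eq_zero, sub_eq_zero, Nat.cast_inj] at h
  simp only [← List.count_pos_iff, not_and_or, not_lt, nonpos_iff_eq_zero] at h01 h23
  have hzero : ∀ a : Fin 4, l.count a = 0
    | 0 | 1 | 2 | 3 => by omega
  obtain ⟨a, ha⟩ := List.exists_mem_of_ne_nil l hl
  exact List.count_eq_zero.mp (hzero a) ha

/-- The letters `0, 1, 2, 3` stand for `a, a⁻¹, b, b⁻¹`, so the word below is
`aⁿ bⁿ a⁻ⁿ b⁻ⁿ`. -/
lemma not_inverse_pair_mem_of_short_infix {n : ℕ} {f : List (Fin 4)}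
    (hf : f <:+: List.replicate n 0 ++ List.replicate n 2 ++ List.replicate n 1 ++
      List.replicate n 3)
    (hlen : f.length ≤ n) : ¬(0 ∈ f ∧ 1 ∈ f) ∧ ¬(2 ∈ f ∧ 3 ∈ f) := by
  constructor
  · rintro ⟨h0, h1⟩
    have := List.IsInfix.length_lt_of_mem_of_mem (m := List.replicate n 2)
      (by simpa only [List.append_assoc] using hf) h0 h1 (by simp) (by simp)
    simp at this
    omega
  · rintro ⟨h2, h3⟩
    have := hf.length_lt_of_mem_of_mem h2 h3 (by simp) (by simp)
    simp at this
    omega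

/-- The word problem of `ℤ²` with respect to its standard symmetric
semigroup presentation is not context-free. -/
theorem word_problem_Z2_not_contextFree :
    ¬ Language.IsContextFree {w : List (Fin 4) | (w.map psiZ2).sum = (0, 0)} := by
  rintro ⟨g, hg⟩
  have hmem (w : List (Fin 4)) : w ∈ g.language ↔ (w.map psiZ2).sum = 0 := by rw [hg]; rfl
  obtain ⟨n, hpump⟩ := g.pumping
  set w := List.replicate n 0 ++ List.replicate n 2 ++ List.replicate n 1 ++
    List.replicate n (3 : Fin 4) with hw_def
  have hw : (w.map psiZ2).sum = 0 := by
    rw [hw_def, sum_map_psiZ2]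
    simp [List.count_replicate]
  have hw_len : n ≤ w.length := by
    simp only [hw_def, List.length_append, List.length_replicate]
    omega
  obtain ⟨u, v, x, y, z, hw_eq, hlen, hne, hpumped⟩ := hpump w ((hmem w).mpr hw) hw_len
  have hvy : ((v ++ y).map psiZ2).sum = 0 := by
    have h₀ := (hmem _).mp (hpumped 0)
    rw [hw_eq] at hw
    simp only [List.replicate_zero, List.flatten_nil, List.append_nil, List.map_append,
      List.sum_append] at h₀ hw ⊢
    linear_combination hw - h₀
  obtain ⟨h01, h23⟩ := not_inverse_pair_mem_of_short_infix ⟨u, z, by rw [← hw_def, hw_eq]; simp⟩ hlen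
  have hsub : v ++ y ⊆ v ++ x ++ y := fun a ha => by simp at ha ⊢; tauto
  exact sum_map_psiZ2_ne_zero hne (fun h => h01 ⟨hsub h.1, hsub h.2⟩)
    (fun h => h23 ⟨hsub h.1, hsub h.2⟩) hvy
end

section
/- Let F be the free group on two generators a, b, and let K be the subgroup of F generated by the set { aᵏ bˡ a b⁻ˡ a⁻ᵏ : k, l ∈ ℤ, l ≠ 0 }. Then the pair (F,K) is context-free: with Σ = {a, a⁻¹, b, b⁻¹} and ψ : Σ → F the natural map sending each letter to the corresponding generator or its inverse, the language { w ∈ Σ* : ψ(w) ∈ K } is context-free. (The associated Schreier graph is the comb lattice, a tree with loops added, which is a context-free graph.) -/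
/-- The generator `a` of the free group on two generators. -/
def fga : FreeGroup (Fin 2) := FreeGroup.of 0

/-- The generator `b` of the free group on two generators. -/
def fgb : FreeGroup (Fin 2) := FreeGroup.of 1

/-- The subgroup `K` of `F = F(a,b)` freely generated by
`{ aᵏ bˡ a b⁻ˡ a⁻ᵏ : k, l ∈ ℤ, l ≠ 0 }`; its Schreier graph is the comb lattice. -/
def combSubgroup : Subgroup (FreeGroup (Fin 2)) :=
  Subgroup.closure
    {x | ∃ k l : ℤ, l ≠ 0 ∧ x = fga ^ k * fgb ^ l * fga * fgb ^ (-l) * fga ^ (-k)}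

/-- The natural symmetric semigroup presentation of the free group on `a, b`. -/
def psiComb : Fin 4 → FreeGroup (Fin 2) := ![fga, fga⁻¹, fgb, fgb⁻¹]

/-!
`F` acts on the comb `ℤ × ℤ` (spine `y = 0`, teeth `x = const`): `a` moves along the spine and
fixes the teeth, `b` moves along the teeth. The generator `aᵏ bˡ a b⁻ˡ a⁻ᵏ` of `K` is `a`
conjugated by an element moving the origin onto a tooth (`l ≠ 0`), so `K` fixes the origin: a
word representing an element of `K` has height `0` and net `a`-exponent `0` along the spine.
A first-passage decomposition of such a word shows that `combGrammar` generates it.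
Conversely, assign to `S` the subgroup `K` and to `X`, `Y` the subgroups `⟨bˡ a b⁻ˡ : l ≥ 0⟩`
and `⟨bˡ a b⁻ˡ : l ≤ 0⟩`. Every rule maps the product of the sets of its right-hand side into
the subgroup of its left-hand side, which is checked on generators using that `a` normalises `K`.
-/

open Pointwise

theorem List.exists_first_failing_prefix {α : Type*} {P : List α → Prop} {t : List α}
    (h₀ : P []) (ht : ¬ P t) :
    ∃ u c v, t = u ++ c :: v ∧ (∀ p, p <+: u → P p) ∧ ¬ P (u ++ [c]) := by
  induction t generalizing P with
  | nil => exact absurd h₀ ht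
  | cons c t ih =>
    by_cases hc : P [c]
    · obtain ⟨u, d, v, rfl, hu, hud⟩ := ih (P := fun p => P (c :: p)) hc ht
      refine ⟨c :: u, d, v, rfl, fun p hp => ?_, hud⟩
      obtain rfl | ⟨q, rfl, hq⟩ := List.prefix_cons_iff.1 hp
      exacts [h₀, hu q hq]
    · exact ⟨[], c, t, rfl, by simpa using h₀, hc⟩

theorem ContextFreeGrammar.Derives.cons {T : Type*} {g : ContextFreeGrammar T}
    {σ : Symbol T g.NT} {u x y : List (Symbol T g.NT)}
    (hσ : g.Derives [σ] x) (hu : g.Derives u y) : g.Derives (σ :: u) (x ++ y) :=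
  (hσ.append_right u).trans (hu.append_left x)

theorem Subgroup.conj_mem_of_mem_closure {G : Type*} [Group G] {S : Set G} {H : Subgroup G}
    (g : G) (hS : ∀ s ∈ S, g * s * g⁻¹ ∈ H) {x : G} (hx : x ∈ Subgroup.closure S) :
    g * x * g⁻¹ ∈ H :=
  (Subgroup.closure_le (K := H.comap (MulAut.conj g).toMonoidHom)).2 hS hx

theorem Subgroup.singleton_mul_subset_of_mem {G : Type*} [Group G] {H : Subgroup G} {g : G}
    (hg : g ∈ H) : {g} * (H : Set G) ⊆ H := by
  rintro _ ⟨_, rfl, x, hx, rfl⟩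
  exact H.mul_mem hg hx

theorem Subgroup.singleton_mul_conj_subset {G : Type*} [Group G] {H K : Subgroup G} {g g' : G}
    (hg' : g' = g⁻¹) (hK : ∀ x ∈ K, g * x * g⁻¹ ∈ H) :
    {g} * ((K : Set G) * ({g'} * (H : Set G))) ⊆ H := by
  rintro _ ⟨_, rfl, _, ⟨x, hx, _, ⟨_, rfl, y, hy, rfl⟩, rfl⟩, rfl⟩
  simpa [hg', mul_assoc] using H.mul_mem (hK x hx) hy

namespace CombPair

open Symbol ContextFreeGrammar

def bExp : Fin 4 → ℤ := ![0, 0, 1, -1]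

def aExp : Fin 4 → ℤ := ![1, -1, 0, 0]

def height (w : List (Fin 4)) : ℤ := (w.map bExp).sum

/-- `aExpAt w m` is the total exponent of `a` in the letters of `w` that are read at height `m`,
i.e. after a prefix of height `m`. -/
def aExpAt : List (Fin 4) → ℤ → ℤ
  | [], _ => 0
  | c :: t, m => (if m = 0 then aExp c else 0) + aExpAt t (m - bExp c)

@[simp] lemma height_nil : height [] = 0 := rfl

@[simp] lemma height_cons (c : Fin 4) (w : List (Fin 4)) : height (c :: w) = bExp c + height w :=
  List.sum_cons

@[simp] lemma height_append (u v : List (Fin 4)) : height (u ++ v) = height u + height v := by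
  simp [height]

@[simp] lemma aExpAt_nil (m : ℤ) : aExpAt [] m = 0 := rfl

@[simp] lemma aExpAt_cons (c : Fin 4) (w : List (Fin 4)) (m : ℤ) :
    aExpAt (c :: w) m = (if m = 0 then aExp c else 0) + aExpAt w (m - bExp c) := rfl

@[simp] lemma aExpAt_append (u v : List (Fin 4)) (m : ℤ) :
    aExpAt (u ++ v) m = aExpAt u m + aExpAt v (m - height u) := by
  induction u generalizing m with
  | nil => simp
  | cons c u ih => simp [ih, sub_sub, add_assoc]

lemma aExpAt_eq_zero_of_forall_prefix {w : List (Fin 4)} {m : ℤ}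
    (h : ∀ p, p <+: w → height p ≠ m) : aExpAt w m = 0 := by
  induction w generalizing m with
  | nil => rfl
  | cons c w ih =>
    have hm : m ≠ 0 := fun hm => h [] (List.nil_prefix) (by simp [hm])
    have hw : ∀ p, p <+: w → height p ≠ m - bExp c := fun p hp => by
      have := h (c :: p) (List.prefix_cons_inj c |>.2 hp)
      simp at this; omega
    simp [hm, ih hw]

def spineShift : Equiv.Perm (ℤ × ℤ) where
  toFun p := if p.2 = 0 then (p.1 + 1, p.2) else p
  invFun p := if p.2 = 0 then (p.1 - 1, p.2) else p
  left_inv := by rintro ⟨x, y⟩; by_cases h : y = 0 <;> simp [h]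
  right_inv := by rintro ⟨x, y⟩; by_cases h : y = 0 <;> simp [h]

def toothShift : Equiv.Perm (ℤ × ℤ) where
  toFun p := (p.1, p.2 + 1)
  invFun p := (p.1, p.2 - 1)
  left_inv p := by simp
  right_inv p := by simp

def combAction : FreeGroup (Fin 2) →* Equiv.Perm (ℤ × ℤ) :=
  FreeGroup.lift ![spineShift, toothShift]

@[simp] lemma combAction_fga : combAction fga = spineShift := by
  simp [combAction, fga]

@[simp] lemma combAction_fgb : combAction fgb = toothShift := by
  simp [combAction, fgb]

lemma spineShift_zpow_apply_snd (k : ℤ) (p : ℤ × ℤ) : ((spineShift ^ k) p).2 = p.2 := by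
  have h : ∀ q : ℤ × ℤ, (spineShift q).2 = q.2 := fun q => by
    simp only [spineShift, Equiv.coe_fn_mk]; split_ifs <;> rfl
  induction k using Int.induction_on generalizing p with
  | zero => rfl
  | succ k ih => rw [zpow_add_one, Equiv.Perm.mul_apply, ih, h]
  | pred k ih =>
    rw [zpow_sub_one, Equiv.Perm.mul_apply, ih]
    have := h (spineShift⁻¹ p)
    rwa [← Equiv.Perm.mul_apply, mul_inv_cancel, Equiv.Perm.one_apply, eq_comm] at this

lemma toothShift_zpow_apply (l : ℤ) (p : ℤ × ℤ) : (toothShift ^ l) p = (p.1, p.2 + l) := by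
  induction l using Int.induction_on generalizing p with
  | zero => simp
  | succ l ih =>
    rw [zpow_add_one, Equiv.Perm.mul_apply, ih]
    simp [toothShift]; ring
  | pred l ih =>
    rw [zpow_sub_one, Equiv.Perm.mul_apply, ih]
    simp [toothShift, Equiv.Perm.inv_def]; ring

lemma combAction_psiComb_apply (c : Fin 4) (x y : ℤ) :
    combAction (psiComb c) (x, y) = (x + if y = 0 then aExp c else 0, y + bExp c) := by
  fin_cases c <;> by_cases hy : y = 0 <;>
    simp [psiComb, spineShift, toothShift, aExp, bExp, Equiv.Perm.inv_def, hy, sub_eq_add_neg]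

lemma bExp_eq_zero_of_aExp_ne_zero {c : Fin 4} (h : aExp c ≠ 0) : bExp c = 0 := by
  fin_cases c <;> simp_all [aExp, bExp]

/-- The product acts from its last letter, so the letters of `w` that act on the spine are those
read at height `y + height w`. -/
lemma combAction_prod_apply (w : List (Fin 4)) (x y : ℤ) :
    combAction (w.map psiComb).prod (x, y) = (x + aExpAt w (y + height w), y + height w) := by
  induction w with
  | nil => simp
  | cons c w ih =>
    rw [List.map_cons, List.prod_cons, map_mul, Equiv.Perm.mul_apply, ih,
      combAction_psiComb_apply]
    have hshift : y + (bExp c + height w) - bExp c = y + height w := by ring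
    have hcond : (if y + (bExp c + height w) = 0 then aExp c else 0) =
        if y + height w = 0 then aExp c else 0 := by
      by_cases ha : aExp c = 0
      · simp [ha]
      · simp [bExp_eq_zero_of_aExp_ne_zero ha]
    simp only [height_cons, aExpAt_cons, hshift, hcond, Prod.mk.injEq]
    constructor <;> ring

def originStabilizer : Subgroup (FreeGroup (Fin 2)) :=
  (MulAction.stabilizer (Equiv.Perm (ℤ × ℤ)) ((0, 0) : ℤ × ℤ)).comap combAction

lemma combSubgroup_le_originStabilizer : combSubgroup ≤ originStabilizer := by
  refine (Subgroup.closure_le _).2 ?_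
  rintro _ ⟨k, l, hl, rfl⟩
  obtain ⟨h, hh⟩ : ∃ h, h = fga ^ k * fgb ^ l := ⟨_, rfl⟩
  rw [SetLike.mem_coe, show fga ^ k * fgb ^ l * fga * fgb ^ (-l) * fga ^ (-k) = h * fga * h⁻¹ by
    rw [hh]; group]
  have hheight : (combAction h⁻¹ (0, 0)).2 = -l := by
    rw [show h⁻¹ = fgb ^ (-l) * fga ^ (-k) by rw [hh]; group, map_mul, map_zpow, map_zpow,
      Equiv.Perm.mul_apply, combAction_fga, combAction_fgb, toothShift_zpow_apply,
      spineShift_zpow_apply_snd, zero_add]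
  have hfix : spineShift (combAction h⁻¹ (0, 0)) = combAction h⁻¹ (0, 0) := by
    simp only [spineShift, Equiv.coe_fn_mk, hheight, neg_eq_zero, hl, if_false]
  simp only [originStabilizer, Subgroup.mem_comap, MulAction.mem_stabilizer_iff,
    Equiv.Perm.smul_def, map_mul, Equiv.Perm.mul_apply, combAction_fga, hfix]
  rw [← Equiv.Perm.mul_apply, ← map_mul, mul_inv_cancel, map_one, Equiv.Perm.one_apply]

lemma height_eq_zero_and_aExpAt_eq_zero_of_mem {w : List (Fin 4)}
    (hw : (w.map psiComb).prod ∈ combSubgroup) : height w = 0 ∧ aExpAt w 0 = 0 := by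
  have := combSubgroup_le_originStabilizer hw
  simp only [originStabilizer, Subgroup.mem_comap, MulAction.mem_stabilizer_iff,
    Equiv.Perm.smul_def, combAction_prod_apply, Prod.mk.injEq, zero_add] at this
  obtain ⟨h₁, h₂⟩ := this
  exact ⟨h₂, by rwa [h₂] at h₁⟩

lemma exists_split_of_height_neg {t : List (Fin 4)} (ht : height t < 0) :
    ∃ x s, t = x ++ 3 :: s ∧ height x = 0 ∧ ∀ p, p <+: x → 0 ≤ height p := by
  obtain ⟨x, c, s, rfl, hx, hc⟩ :=
    List.exists_first_failing_prefix (P := fun p => 0 ≤ height p) (by simp) (by simpa using ht)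
  have hx₀ := hx x List.prefix_rfl
  obtain rfl : c = 3 := by revert hc; fin_cases c <;> simp [bExp] <;> omega
  exact ⟨x, s, rfl, by simp [bExp] at hc; omega, hx⟩

lemma exists_split_of_height_pos {t : List (Fin 4)} (ht : 0 < height t) :
    ∃ x s, t = x ++ 2 :: s ∧ height x = 0 ∧ ∀ p, p <+: x → height p ≤ 0 := by
  obtain ⟨x, c, s, rfl, hx, hc⟩ :=
    List.exists_first_failing_prefix (P := fun p => height p ≤ 0) (by simp) (by simpa using ht)
  have hx₀ := hx x List.prefix_rfl
  obtain rfl : c = 2 := by revert hc; fin_cases c <;> simp [bExp] <;> omega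
  exact ⟨x, s, rfl, by simp [bExp] at hc; omega, hx⟩

lemma exists_split_of_aExpAt_neg {t : List (Fin 4)} (ht : aExpAt t 0 < 0) :
    ∃ u v, t = u ++ 1 :: v ∧ height u = 0 ∧ aExpAt u 0 = 0 := by
  obtain ⟨u, c, v, rfl, hu, hc⟩ :=
    List.exists_first_failing_prefix (P := fun p => 0 ≤ aExpAt p 0) (by simp) (by simpa using ht)
  have hu₀ := hu u List.prefix_rfl
  obtain ⟨hh, rfl⟩ : height u = 0 ∧ c = 1 := by
    by_cases hh : height u = 0 <;> revert hc <;> fin_cases c <;> simp [aExp, hh] <;> omega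
  exact ⟨u, v, rfl, hh, by simp [aExp, hh] at hc; omega⟩

lemma exists_split_of_aExpAt_pos {t : List (Fin 4)} (ht : 0 < aExpAt t 0) :
    ∃ u v, t = u ++ 0 :: v ∧ height u = 0 ∧ aExpAt u 0 = 0 := by
  obtain ⟨u, c, v, rfl, hu, hc⟩ :=
    List.exists_first_failing_prefix (P := fun p => aExpAt p 0 ≤ 0) (by simp) (by simpa using ht)
  have hu₀ := hu u List.prefix_rfl
  obtain ⟨hh, rfl⟩ : height u = 0 ∧ c = 0 := by
    by_cases hh : height u = 0 <;> revert hc <;> fin_cases c <;> simp [aExp, hh] <;> omega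
  exact ⟨u, v, rfl, hh, by simp [aExp, hh] at hc; omega⟩

inductive CombNT
  | S | X | Y
  deriving DecidableEq

/-- With the letters read as `a, a⁻¹, b, b⁻¹`:
`S → ε | a S a⁻¹ S | a⁻¹ S a S | b X b⁻¹ S | b⁻¹ Y b S`,
`X → ε | a X | a⁻¹ X | b X b⁻¹ X` and `Y → ε | a Y | a⁻¹ Y | b⁻¹ Y b Y`. -/
def combRules : Finset (ContextFreeRule (Fin 4) CombNT) :=
  {⟨.S, []⟩,
   ⟨.S, [terminal 0, nonterminal .S, terminal 1, nonterminal .S]⟩,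
   ⟨.S, [terminal 1, nonterminal .S, terminal 0, nonterminal .S]⟩,
   ⟨.S, [terminal 2, nonterminal .X, terminal 3, nonterminal .S]⟩,
   ⟨.S, [terminal 3, nonterminal .Y, terminal 2, nonterminal .S]⟩,
   ⟨.X, []⟩,
   ⟨.X, [terminal 0, nonterminal .X]⟩,
   ⟨.X, [terminal 1, nonterminal .X]⟩,
   ⟨.X, [terminal 2, nonterminal .X, terminal 3, nonterminal .X]⟩,
   ⟨.Y, []⟩,
   ⟨.Y, [terminal 0, nonterminal .Y]⟩,
   ⟨.Y, [terminal 1, nonterminal .Y]⟩,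
   ⟨.Y, [terminal 3, nonterminal .Y, terminal 2, nonterminal .Y]⟩}

abbrev combGrammar : ContextFreeGrammar (Fin 4) := ⟨CombNT, .S, combRules⟩

lemma derives_of_mem_combRules {A : CombNT} {out v : List (Symbol (Fin 4) CombNT)}
    (hr : ⟨A, out⟩ ∈ combRules) (h : combGrammar.Derives out v) :
    combGrammar.Derives [nonterminal A] v :=
  Relation.ReflTransGen.head ⟨_, hr, ContextFreeRule.Rewrites.input_output⟩ h

lemma derives_cons_of_mem_combRules {A B : CombNT} {c : Fin 4} {w : List (Fin 4)}
    (hr : ⟨A, [terminal c, nonterminal B]⟩ ∈ combRules)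
    (h : combGrammar.Derives [nonterminal B] (w.map terminal)) :
    combGrammar.Derives [nonterminal A] ((c :: w).map terminal) :=
  derives_of_mem_combRules hr ((Derives.refl _).cons h)

lemma derives_conj_of_mem_combRules {A B C : CombNT} {c d : Fin 4} {x s : List (Fin 4)}
    (hr : ⟨A, [terminal c, nonterminal B, terminal d, nonterminal C]⟩ ∈ combRules)
    (hx : combGrammar.Derives [nonterminal B] (x.map terminal))
    (hs : combGrammar.Derives [nonterminal C] (s.map terminal)) :
    combGrammar.Derives [nonterminal A] ((c :: (x ++ d :: s)).map terminal) := by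
  rw [List.map_cons, List.map_append, List.map_cons]
  exact derives_of_mem_combRules hr ((Derives.refl _).cons (hx.cons ((Derives.refl _).cons hs)))

theorem derives_X_of_nonneg : ∀ w : List (Fin 4), height w = 0 →
    (∀ p, p <+: w → 0 ≤ height p) → combGrammar.Derives [nonterminal .X] (w.map terminal)
  | [], _, _ => derives_of_mem_combRules (by simp [combRules]) (.refl _)
  | 0 :: t, h₀, hp => derives_cons_of_mem_combRules (by simp [combRules]) <|
      derives_X_of_nonneg t (by simpa [bExp] using h₀)
        fun p hq => by simpa [bExp] using hp (0 :: p) (by simpa using hq)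
  | 1 :: t, h₀, hp => derives_cons_of_mem_combRules (by simp [combRules]) <|
      derives_X_of_nonneg t (by simpa [bExp] using h₀)
        fun p hq => by simpa [bExp] using hp (1 :: p) (by simpa using hq)
  | 2 :: t, h₀, hp => by
    obtain ⟨x, s, rfl, hx, hxp⟩ :=
      exists_split_of_height_neg (t := t) (by simp [bExp] at h₀; omega)
    have hs : height s = 0 := by simpa [bExp, hx] using h₀
    have hsp : ∀ p, p <+: s → 0 ≤ height p := fun p hq => by
      simpa [bExp, hx] using hp (2 :: x ++ 3 :: p) (by simpa using hq)
    exact derives_conj_of_mem_combRules (by simp [combRules])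
      (derives_X_of_nonneg x hx hxp) (derives_X_of_nonneg s hs hsp)
  | 3 :: t, _, hp => absurd (hp [3] (by simp)) (by simp [bExp])
termination_by w => w.length

theorem derives_Y_of_nonpos : ∀ w : List (Fin 4), height w = 0 →
    (∀ p, p <+: w → height p ≤ 0) → combGrammar.Derives [nonterminal .Y] (w.map terminal)
  | [], _, _ => derives_of_mem_combRules (by simp [combRules]) (.refl _)
  | 0 :: t, h₀, hp => derives_cons_of_mem_combRules (by simp [combRules]) <|
      derives_Y_of_nonpos t (by simpa [bExp] using h₀)
        fun p hq => by simpa [bExp] using hp (0 :: p) (by simpa using hq)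
  | 1 :: t, h₀, hp => derives_cons_of_mem_combRules (by simp [combRules]) <|
      derives_Y_of_nonpos t (by simpa [bExp] using h₀)
        fun p hq => by simpa [bExp] using hp (1 :: p) (by simpa using hq)
  | 2 :: t, _, hp => absurd (hp [2] (by simp)) (by simp [bExp])
  | 3 :: t, h₀, hp => by
    obtain ⟨x, s, rfl, hx, hxp⟩ :=
      exists_split_of_height_pos (t := t) (by simp [bExp] at h₀; omega)
    have hs : height s = 0 := by simpa [bExp, hx] using h₀
    have hsp : ∀ p, p <+: s → height p ≤ 0 := fun p hq => by
      simpa [bExp, hx] using hp (3 :: x ++ 2 :: p) (by simpa using hq)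
    exact derives_conj_of_mem_combRules (by simp [combRules])
      (derives_Y_of_nonpos x hx hxp) (derives_Y_of_nonpos s hs hsp)
termination_by w => w.length

theorem derives_S_of_aExpAt_eq_zero : ∀ w : List (Fin 4), height w = 0 → aExpAt w 0 = 0 →
    combGrammar.Derives [nonterminal .S] (w.map terminal)
  | [], _, _ => derives_of_mem_combRules (by simp [combRules]) (.refl _)
  | 0 :: t, h₀, ha => by
    obtain ⟨u, v, rfl, hu, hau⟩ :=
      exists_split_of_aExpAt_neg (t := t) (by simp [aExp, bExp] at ha; omega)
    have hv : height v = 0 := by simpa [bExp, hu] using h₀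
    have hav : aExpAt v 0 = 0 := by simpa [aExp, bExp, hu, hau] using ha
    exact derives_conj_of_mem_combRules (by simp [combRules])
      (derives_S_of_aExpAt_eq_zero u hu hau) (derives_S_of_aExpAt_eq_zero v hv hav)
  | 1 :: t, h₀, ha => by
    obtain ⟨u, v, rfl, hu, hau⟩ :=
      exists_split_of_aExpAt_pos (t := t) (by simp [aExp, bExp] at ha; omega)
    have hv : height v = 0 := by simpa [bExp, hu] using h₀
    have hav : aExpAt v 0 = 0 := by simpa [aExp, bExp, hu, hau] using ha
    exact derives_conj_of_mem_combRules (by simp [combRules])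
      (derives_S_of_aExpAt_eq_zero u hu hau) (derives_S_of_aExpAt_eq_zero v hv hav)
  | 2 :: t, h₀, ha => by
    obtain ⟨x, s, rfl, hx, hxp⟩ :=
      exists_split_of_height_neg (t := t) (by simp [bExp] at h₀; omega)
    have hxa : aExpAt x (-1) = 0 :=
      aExpAt_eq_zero_of_forall_prefix fun p hp => by linarith [hxp p hp]
    have hs : height s = 0 := by simpa [bExp, hx] using h₀
    have has : aExpAt s 0 = 0 := by simpa [aExp, bExp, hx, hxa] using ha
    exact derives_conj_of_mem_combRules (by simp [combRules])
      (derives_X_of_nonneg x hx hxp) (derives_S_of_aExpAt_eq_zero s hs has)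
  | 3 :: t, h₀, ha => by
    obtain ⟨x, s, rfl, hx, hxp⟩ :=
      exists_split_of_height_pos (t := t) (by simp [bExp] at h₀; omega)
    have hxa : aExpAt x 1 = 0 :=
      aExpAt_eq_zero_of_forall_prefix fun p hp => by linarith [hxp p hp]
    have hs : height s = 0 := by simpa [bExp, hx] using h₀
    have has : aExpAt s 0 = 0 := by simpa [aExp, bExp, hx, hxa] using ha
    exact derives_conj_of_mem_combRules (by simp [combRules])
      (derives_Y_of_nonpos x hx hxp) (derives_S_of_aExpAt_eq_zero s hs has)
termination_by w => w.length

def toothSubgroup (s : Set ℤ) : Subgroup (FreeGroup (Fin 2)) :=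
  Subgroup.closure {x | ∃ l ∈ s, x = fgb ^ l * fga * fgb ^ (-l)}

lemma fga_mem_toothSubgroup {s : Set ℤ} (h : 0 ∈ s) : fga ∈ toothSubgroup s :=
  Subgroup.subset_closure ⟨0, h, by simp⟩

lemma conj_mem_toothSubgroup {s t : Set ℤ} (m : ℤ) (hst : ∀ l ∈ s, l + m ∈ t)
    {x : FreeGroup (Fin 2)} (hx : x ∈ toothSubgroup s) :
    fgb ^ m * x * (fgb ^ m)⁻¹ ∈ toothSubgroup t := by
  refine Subgroup.conj_mem_of_mem_closure _ ?_ hx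
  rintro _ ⟨l, hl, rfl⟩
  exact Subgroup.subset_closure ⟨l + m, hst l hl, by group⟩

lemma toothSubgroup_le_combSubgroup {s : Set ℤ} (h : 0 ∉ s) :
    toothSubgroup s ≤ combSubgroup := by
  refine (Subgroup.closure_le _).2 ?_
  rintro _ ⟨l, hl, rfl⟩
  exact Subgroup.subset_closure ⟨0, l, fun h0 => h (h0 ▸ hl), by group⟩

lemma conj_mem_combSubgroup (n : ℤ) {x : FreeGroup (Fin 2)} (hx : x ∈ combSubgroup) :
    fga ^ n * x * (fga ^ n)⁻¹ ∈ combSubgroup := by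
  refine Subgroup.conj_mem_of_mem_closure _ ?_ hx
  rintro _ ⟨k, l, hl, rfl⟩
  exact Subgroup.subset_closure ⟨n + k, l, hl, by group⟩

def ntSubgroup : CombNT → Subgroup (FreeGroup (Fin 2))
  | .S => combSubgroup
  | .X => toothSubgroup (Set.Ici 0)
  | .Y => toothSubgroup (Set.Iic 0)

def symbolSet : Symbol (Fin 4) CombNT → Set (FreeGroup (Fin 2))
  | terminal c => {psiComb c}
  | nonterminal A => ntSubgroup A

lemma prod_map_symbolSet_output_subset {r : ContextFreeRule (Fin 4) CombNT} (hr : r ∈ combRules) :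
    (r.output.map symbolSet).prod ⊆ ntSubgroup r.input := by
  simp only [combRules, Finset.mem_insert, Finset.mem_singleton] at hr
  rcases hr with rfl | rfl | rfl | rfl | rfl | rfl | rfl | rfl | rfl | rfl | rfl | rfl | rfl <;>
    simp only [List.map, List.prod_cons, List.prod_nil, mul_one, symbolSet, ntSubgroup]
  · exact Set.one_subset.2 (one_mem _)
  · exact Subgroup.singleton_mul_conj_subset (by simp [psiComb]) fun x hx => by
      simpa [psiComb] using conj_mem_combSubgroup 1 hx
  · exact Subgroup.singleton_mul_conj_subset (by simp [psiComb]) fun x hx => by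
      simpa [psiComb] using conj_mem_combSubgroup (-1) hx
  · exact Subgroup.singleton_mul_conj_subset (by simp [psiComb]) fun x hx =>
      toothSubgroup_le_combSubgroup (s := Set.Ioi 0) (by simp) <| by
        simpa [psiComb] using conj_mem_toothSubgroup 1 (fun l (hl : 0 ≤ l) => by simp; omega) hx
  · exact Subgroup.singleton_mul_conj_subset (by simp [psiComb]) fun x hx =>
      toothSubgroup_le_combSubgroup (s := Set.Iio 0) (by simp) <| by
        simpa [psiComb] using
          conj_mem_toothSubgroup (-1) (fun l (hl : l ≤ 0) => by simp; omega) hx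
  · exact Set.one_subset.2 (one_mem _)
  · exact Subgroup.singleton_mul_subset_of_mem (fga_mem_toothSubgroup (by simp))
  · exact Subgroup.singleton_mul_subset_of_mem (inv_mem (fga_mem_toothSubgroup (by simp)))
  · exact Subgroup.singleton_mul_conj_subset (by simp [psiComb]) fun x hx => by
      simpa [psiComb] using conj_mem_toothSubgroup 1 (fun l (hl : 0 ≤ l) => by simp; omega) hx
  · exact Set.one_subset.2 (one_mem _)
  · exact Subgroup.singleton_mul_subset_of_mem (fga_mem_toothSubgroup (by simp))
  · exact Subgroup.singleton_mul_subset_of_mem (inv_mem (fga_mem_toothSubgroup (by simp)))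
  · exact Subgroup.singleton_mul_conj_subset (by simp [psiComb]) fun x hx => by
      simpa [psiComb] using conj_mem_toothSubgroup (-1) (fun l (hl : l ≤ 0) => by simp; omega) hx

lemma prod_map_symbolSet_subset_of_derives {u v : List (Symbol (Fin 4) CombNT)}
    (h : combGrammar.Derives u v) :
    (v.map symbolSet).prod ⊆ (u.map symbolSet).prod := by
  induction h with
  | refl => rfl
  | tail _ huv ih =>
    obtain ⟨r, hr, hrw⟩ := huv
    obtain ⟨p, q, rfl, rfl⟩ := hrw.exists_parts
    refine subset_trans ?_ ih
    simp only [List.map_append, List.prod_append]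
    gcongr
    simpa [symbolSet] using prod_map_symbolSet_output_subset hr

lemma prod_map_symbolSet_map_terminal (w : List (Fin 4)) :
    ((w.map terminal).map symbolSet).prod = {(w.map psiComb).prod} := by
  induction w with
  | nil => exact Set.singleton_one.symm
  | cons c w ih =>
    simp only [List.map_cons, List.prod_cons, ih, symbolSet, Set.singleton_mul_singleton]

theorem prod_mem_of_mem_language {w : List (Fin 4)} (hw : w ∈ combGrammar.language) :
    (w.map psiComb).prod ∈ combSubgroup := by
  have := prod_map_symbolSet_subset_of_derives hw
  rw [prod_map_symbolSet_map_terminal] at this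
  simpa [symbolSet, ntSubgroup] using this

end CombPair

/-- The pair `(F, K)` with `F` free on `a,b` and
`K = ⟨ aᵏ bˡ a b⁻ˡ a⁻ᵏ : k, l ∈ ℤ, l ≠ 0 ⟩` is context-free. -/
theorem comb_pair_contextFree :
    Language.IsContextFree
      {w : List (Fin 4) | (w.map psiComb).prod ∈ combSubgroup} := by
  refine ⟨CombPair.combGrammar,
    Set.ext fun w => ⟨CombPair.prod_mem_of_mem_language, fun hw => ?_⟩⟩
  obtain ⟨hheight, haExp⟩ := CombPair.height_eq_zero_and_aExpAt_eq_zero_of_mem hw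
  exact CombPair.derives_S_of_aExpAt_eq_zero w hheight haExp
end
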